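/- arXiv:2505.02700 — 2 statements merged into one kernel-verified Lean document; each statement's English description precedes it below -/
import Mathlib

section
/- Cut admissibility for box formulas: if cut admissibility holds for the formula χ, and G∞ℓK⁺_s ⊢ Γ ⇒_s Δ,□χ and G∞ℓK⁺_s ⊢ □χ,Γ ⇒_s Δ, then G∞ℓK⁺_s ⊢ Γ ⇒_s Δ. -/
/-! Formulas of the modal language with ⊥, →, □ and the master modality ⊞. -/
inductive Fml : Type
  | var : ℕ → Fml
  | bot : Fml
  | imp : Fml → Fml → Fml
  | box : Fml → Fml
  | mbox : Fml → Fml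

/-- The size of a formula (number of symbols). -/
def Fml.size : Fml → ℕ
  | .var _ => 1
  | .bot => 1
  | .imp a b => a.size + b.size + 1
  | .box a => a.size + 1
  | .mbox a => a.size + 1

/-- Annotations: either a formula in focus or the symbol ∘ (unfocused). -/
inductive Ann : Type
  | o : Ann
  | fml : Fml → Ann

abbrev Msf := Multiset Fml

/-- `Γ, ⊞Γ`. -/
def dne (P : Msf) : Msf := P + P.map Fml.mbox

/-- An annotated sequent `Γ ⇒_s Δ`. -/
structure Sequent where
  left : Msf
  ann : Ann
  right : Msf

/-- The condition for being an annotated sequent: if the annotation is a formula `φ`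
then `⊞φ` occurs on the right. -/
def Sequent.ok (S : Sequent) : Prop :=
  ∀ φ : Fml, S.ann = Ann.fml φ → Fml.mbox φ ∈ S.right

/-- Rule tags: the rule applied at a node of a derivation tree, together with all the
data of the rule instance. -/
inductive Tag : Type
  | ax (Γ : Msf) (p : ℕ) (Δ : Msf) (s : Ann)
  | axBot (Γ : Msf) (Δ : Msf) (s : Ann)
  | impL (Γ : Msf) (φ ψ : Fml) (Δ : Msf) (s : Ann)
  | impR (Γ : Msf) (φ ψ : Fml) (Δ : Msf) (s : Ann)
  | box (Sg Γ P Δ : Msf) (φ : Fml) (s : Ann)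
  | mboxF (Sg Γ P Δ : Msf) (φ : Fml)
  | mboxU (Sg Γ P Δ : Msf) (φ : Fml) (s : Ann)
  | cut (Γ Δ : Msf) (χ : Fml) (s : Ann)

/-- Number of children (premises and witnesses) of each rule. -/
def Tag.arity : Tag → ℕ
  | .ax .. => 0
  | .axBot .. => 0
  | .impL .. => 2
  | .impR .. => 1
  | .box .. => 1
  | .mboxF .. => 2
  | .mboxU .. => 2
  | .cut .. => 2

/-- Conclusion sequent of a rule instance. -/
def Tag.concl : Tag → Sequent
  | .ax Γ p Δ s => ⟨Fml.var p ::ₘ Γ, s, Fml.var p ::ₘ Δ⟩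
  | .axBot Γ Δ s => ⟨Fml.bot ::ₘ Γ, s, Δ⟩
  | .impL Γ φ ψ Δ s => ⟨Fml.imp φ ψ ::ₘ Γ, s, Δ⟩
  | .impR Γ φ ψ Δ s => ⟨Γ, s, Fml.imp φ ψ ::ₘ Δ⟩
  | .box Sg Γ P Δ φ s => ⟨Sg + Γ.map Fml.box + P.map Fml.mbox, s, Fml.box φ ::ₘ Δ⟩
  | .mboxF Sg Γ P Δ φ => ⟨Sg + Γ.map Fml.box + P.map Fml.mbox, Ann.fml φ, Fml.mbox φ ::ₘ Δ⟩
  | .mboxU Sg Γ P Δ φ s => ⟨Sg + Γ.map Fml.box + P.map Fml.mbox, s, Fml.mbox φ ::ₘ Δ⟩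
  | .cut Γ Δ _ s => ⟨Γ, s, Δ⟩

/-- The `i`-th premise/witness sequent of a rule instance (junk value out of range). -/
def Tag.prem : Tag → ℕ → Sequent
  | .impL Γ φ _ Δ s, 0 => ⟨Γ, s, φ ::ₘ Δ⟩
  | .impL Γ _ ψ Δ s, 1 => ⟨ψ ::ₘ Γ, s, Δ⟩
  | .impR Γ φ ψ Δ s, 0 => ⟨φ ::ₘ Γ, s, ψ ::ₘ Δ⟩
  | .box _ Γ P _ φ _, 0 => ⟨Γ + dne P, Ann.o, {φ}⟩
  | .mboxF _ Γ P _ φ, 0 => ⟨Γ + dne P, Ann.o, {φ}⟩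
  | .mboxF _ Γ P _ φ, 1 => ⟨Γ + dne P, Ann.fml φ, {Fml.mbox φ}⟩
  | .mboxU _ Γ P _ φ _, 0 => ⟨Γ + dne P, Ann.o, {φ}⟩
  | .mboxU _ Γ P _ φ _, 1 => ⟨Γ + dne P, Ann.fml φ, {Fml.mbox φ}⟩
  | .cut Γ Δ χ s, 0 => ⟨Γ, s, χ ::ₘ Δ⟩
  | .cut Γ Δ χ s, 1 => ⟨χ ::ₘ Γ, s, Δ⟩
  | _, _ => ⟨0, Ann.o, 0⟩

/-- Side conditions: `⊞_u` is applicable only when `s ≠ φ`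
(`⊞_f` has `s = φ` built into its conclusion). -/
def Tag.sideOk : Tag → Prop
  | .mboxU _ _ _ _ φ s => s ≠ Ann.fml φ
  | _ => True

/-- Which children are witnesses (proofs in a strictly lower-indexed system). -/
def Tag.witness : Tag → ℕ → Bool
  | .box .., 0 => true
  | .mboxF .., 0 => true
  | .mboxU .., 0 => true
  | .mboxU .., 1 => true
  | _, _ => false

/-- Progress occurs exactly at the right premise of `⊞_f`. -/
def Tag.progress : Tag → ℕ → Bool
  | .mboxF .., 1 => true
  | _, _ => false

/-- Whether a node is a cut. -/
def Tag.isCut : Tag → Prop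
  | .cut .. => True
  | _ => False

/-- The cut formula of a cut node. -/
def Tag.cutFml : Tag → Option Fml
  | .cut _ _ χ _ => some χ
  | _ => none

/-- A (possibly non-wellfounded) derivation tree: a partial labelling of addresses by
rule instances.  Witnesses (and witnesses of witnesses, and so on) are included as
subtrees hanging off witness edges. -/
structure PreProof : Type where
  label : List ℕ → Option Tag

universe u

/-- Natural (Hessenberg) addition of ordinals, as `Ordinal.nadd` was defined in the older
Mathlib (removed from the current one). -/
noncomputable def Ordinal.nadd : Ordinal.{u} → Ordinal.{u} → Ordinal.{u}
  | a, b =>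
    max (Ordinal.blsub.{u, u} a fun a' _ => Ordinal.nadd a' b)
      (Ordinal.blsub.{u, u} b fun b' _ => Ordinal.nadd a b')
termination_by a b => (a, b)
decreasing_by
  · exact Prod.Lex.left _ _ ‹_›
  · exact Prod.Lex.right _ ‹_›

namespace PreProof

def dom (π : PreProof) (a : List ℕ) : Prop := π.label a ≠ none

/-- Local well-formedness of a derivation tree. -/
structure Wf (π : PreProof) : Prop where
  root : π.dom []
  prefixClosed : ∀ a i, π.dom (a ++ [i]) → π.dom a
  arity : ∀ a t, π.label a = some t → ∀ i : ℕ, (π.dom (a ++ [i]) ↔ i < t.arity)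
  coherent : ∀ a t i ti, π.label a = some t → π.label (a ++ [i]) = some ti →
    ti.concl = t.prem i
  seqOk : ∀ a t, π.label a = some t → t.concl.ok
  side : ∀ a t, π.label a = some t → t.sideOk

/-- The address of the `n`-th node along the branch `f`. -/
def branchPrefix (f : ℕ → ℕ) (n : ℕ) : List ℕ := (List.range n).map f

/-- `f` is an infinite branch of `π`. -/
def IsBranch (π : PreProof) (f : ℕ → ℕ) : Prop := ∀ n, π.dom (branchPrefix f n)

/-- Every infinite branch crosses progress edges or witness edges infinitely often
(together with the ordinal labelling below, this says every infinite branch of each of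
the stratified systems makes progress infinitely often). -/
def ProgressCond (π : PreProof) : Prop :=
  ∀ f : ℕ → ℕ, π.IsBranch f → ∀ N : ℕ, ∃ n, N ≤ n ∧ ∃ t,
    π.label (branchPrefix f n) = some t ∧
    (t.progress (f n) = true ∨ t.witness (f n) = true)

/-- `π` carries an ordinal labelling witnessing that it is a proof of the system indexed
by `α`: witnesses live in systems of strictly smaller index. -/
def OrdOk (π : PreProof) (α : Ordinal.{0}) : Prop :=
  ∃ ord : List ℕ → Ordinal.{0}, ord [] = α ∧
    ∀ a t (i : ℕ), π.label a = some t → π.dom (a ++ [i]) →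
      (t.witness i = true → ord (a ++ [i]) < ord a) ∧
      (t.witness i = false → ord (a ++ [i]) = ord a)

/-- `π` is a proof in `α`-G∞ℓK⁺ + Cut. -/
def IsProofLe (π : PreProof) (α : Ordinal.{0}) : Prop :=
  π.Wf ∧ π.ProgressCond ∧ π.OrdOk α

/-- `π` is a proof in G∞ℓK⁺ + Cut. -/
def IsProof (π : PreProof) : Prop := π.Wf ∧ π.ProgressCond ∧ ∃ α, π.OrdOk α

/-- `‖π‖`: the least `α` such that `π` is a proof in the `α`-indexed system. -/
noncomputable def height (π : PreProof) : Ordinal.{0} := sInf {α : Ordinal.{0} | π.OrdOk α}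

/-- Cut-free (everywhere: in the main fragment, witnesses, witnesses of witnesses, …). -/
def CutFree (π : PreProof) : Prop := ∀ a t, π.label a = some t → ¬ t.isCut

/-- `π` proves the sequent `S`. -/
def Concl (π : PreProof) (S : Sequent) : Prop :=
  ∃ t, π.label [] = some t ∧ t.concl = S

/-- The subtree at address `a`. -/
def sub (π : PreProof) (a : List ℕ) : PreProof := ⟨fun b => π.label (a ++ b)⟩

/-- `a` belongs to the main global fragment: the path to `a` crosses no witness edges. -/
def inMainGlobal (π : PreProof) (a : List ℕ) : Prop :=
  π.dom a ∧ ∀ b i, (b ++ [i]) <+: a → ∀ t, π.label b = some t → t.witness i = false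

/-- `a` belongs to the main local fragment: the path to `a` crosses no witness edges
and no progress edges. -/
def inMainLocal (π : PreProof) (a : List ℕ) : Prop :=
  π.dom a ∧ ∀ b i, (b ++ [i]) <+: a → ∀ t, π.label b = some t →
    t.witness i = false ∧ t.progress i = false

/-- All cuts occur in the main global fragment (the shape of proofs with mCut:
witnesses are cut-free). -/
def MCutShape (π : PreProof) : Prop :=
  ∀ a t, π.label a = some t → t.isCut → π.inMainGlobal a

/-- No cuts occur in the main global fragment (the shape of proofs with wCut). -/
def WCutShape (π : PreProof) : Prop :=
  ∀ a t, π.label a = some t → t.isCut → ¬ π.inMainGlobal a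

/-- No cuts in the main local fragment. -/
def NoCutInMainLocal (π : PreProof) : Prop :=
  ∀ a t, π.label a = some t → t.isCut → ¬ π.inMainLocal a

/-- `π` has local cuts only: it is a proof in G∞ℓK⁺ + mCut all of whose cuts occur
in its main local fragment. -/
def LocalCutsOnly (π : PreProof) : Prop :=
  π.IsProof ∧ ∀ a t, π.label a = some t → t.isCut → π.inMainLocal a

/-- `τ` is a witness of `π`: a subtree hanging off a witness edge from the main
global fragment. -/
def IsWitnessOf (τ π : PreProof) : Prop :=
  ∃ a t i, π.inMainGlobal a ∧ π.label a = some t ∧ t.witness i = true ∧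
    τ = π.sub (a ++ [i])

/-- `|π|`: the local height, i.e. the height of the main local fragment. -/
noncomputable def localHeight (π : PreProof) : ℕ∞ :=
  ⨆ a ∈ {a : List ℕ | π.inMainLocal a}, (a.length : ℕ∞)

/-- All cuts of `π` (including those in witnesses, witnesses of witnesses, …) have
size smaller than `n`. -/
def CutSizesLt (π : PreProof) (n : ℕ) : Prop :=
  ∀ a t χ, π.label a = some t → t.cutFml = some χ → χ.size < n

/-- `(⊞χ, α)`-unblocked: all cuts have cut formula `χ` or `⊞χ`, and cuts with cut
formula `⊞χ` have height at most `α` and cut-free subproofs at their premises. -/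
def Unblocked (π : PreProof) (χ : Fml) (α : Ordinal.{0}) : Prop :=
  ∀ a t ψ, π.label a = some t → t.cutFml = some ψ →
    (ψ = χ ∨ ψ = Fml.mbox χ) ∧
    (ψ = Fml.mbox χ →
      Ordinal.nadd (π.sub (a ++ [0])).height (π.sub (a ++ [1])).height ≤ α ∧
      (π.sub (a ++ [0])).CutFree ∧ (π.sub (a ++ [1])).CutFree)

end PreProof

/-- `G∞ℓK⁺_s ⊢ Γ ⇒_s Δ` (cut-free provability). -/
def Provable (Γ : Msf) (s : Ann) (Δ : Msf) : Prop :=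
  ∃ π : PreProof, π.IsProof ∧ π.CutFree ∧ π.Concl ⟨Γ, s, Δ⟩

/-- `G∞ℓK⁺_s + Cut ⊢ Γ ⇒_s Δ`. -/
def ProvableC (Γ : Msf) (s : Ann) (Δ : Msf) : Prop :=
  ∃ π : PreProof, π.IsProof ∧ π.Concl ⟨Γ, s, Δ⟩

/-- Cut admissibility for the formula `χ`. -/
def CutAdm (χ : Fml) : Prop :=
  ∀ (s : Ann) (Γ Δ : Msf), Provable Γ s (χ ::ₘ Δ) → Provable (χ ::ₘ Γ) s Δ →
    Provable Γ s Δ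

/-- Cut admissibility for `χ` with cuts of height smaller than `α`. -/
def CutAdmBelow (χ : Fml) (α : Ordinal.{0}) : Prop :=
  ∀ (s : Ann) (Γ Δ : Msf) (π τ : PreProof),
    π.IsProof → π.CutFree → π.Concl ⟨Γ, s, χ ::ₘ Δ⟩ →
    τ.IsProof → τ.CutFree → τ.Concl ⟨χ ::ₘ Γ, s, Δ⟩ →
    Ordinal.nadd π.height τ.height < α →
    Provable Γ s Δ

/-! Preservation properties of functions on proofs. -/

def PreservesOrdHeight (f : PreProof → PreProof) : Prop :=
  ∀ π : PreProof, π.IsProof → (f π).height ≤ π.height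

def PreservesLocalHeight (f : PreProof → PreProof) : Prop :=
  ∀ π : PreProof, π.IsProof → (f π).localHeight ≤ π.localHeight

def PreservesCutSizes (f : PreProof → PreProof) : Prop :=
  ∀ (n : ℕ) (π : PreProof), π.IsProof → π.CutSizesLt n → (f π).CutSizesLt n

def PreservesMainLocalCutFree (f : PreProof → PreProof) : Prop :=
  ∀ π : PreProof, π.IsProof → π.NoCutInMainLocal → (f π).NoCutInMainLocal

def PreservesCutLocality (f : PreProof → PreProof) : Prop :=
  ∀ π : PreProof, π.LocalCutsOnly → (f π).LocalCutsOnly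

def PreservesWitnessCutLocality (f : PreProof → PreProof) : Prop :=
  ∀ π : PreProof, π.IsProof → (∀ τ : PreProof, τ.IsWitnessOf π → τ.LocalCutsOnly) →
    ∀ τ : PreProof, τ.IsWitnessOf (f π) → τ.LocalCutsOnly

def WeaklyPreserving (f : PreProof → PreProof) : Prop :=
  PreservesLocalHeight f ∧ PreservesCutSizes f ∧
    PreservesMainLocalCutFree f ∧ PreservesCutLocality f

def StronglyPreserving (f : PreProof → PreProof) : Prop :=
  WeaklyPreserving f ∧ PreservesOrdHeight f ∧ PreservesWitnessCutLocality f

namespace PreProof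

theorem label_sub (π : PreProof) (a b : List ℕ) : (π.sub a).label b = π.label (a ++ b) := rfl

theorem sub_sub (π : PreProof) (a b : List ℕ) : (π.sub a).sub b = π.sub (a ++ b) := by
  show PreProof.mk _ = PreProof.mk _
  congr 1; funext c; simp [sub, List.append_assoc]

theorem dom_of_prefix {π : PreProof} (w : π.Wf) :
    ∀ {a b : List ℕ}, b <+: a → π.dom a → π.dom b := by
  intro a
  induction a using List.reverseRecOn with
  | nil => intro b hb hd; rw [List.prefix_nil.mp hb]; exact hd
  | append_singleton a i ih =>
      intro b hb hd
      rcases List.prefix_concat_iff.mp hb with h | h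
      · rw [h]; exact hd
      · exact ih h (w.prefixClosed a i hd)

theorem branchPrefix_succ (f : ℕ → ℕ) (n : ℕ) :
    branchPrefix f (n + 1) = branchPrefix f n ++ [f n] := by
  simp [branchPrefix, List.range_succ]

/-- Prepend an address to a branch function. -/
noncomputable def extBranch (a : List ℕ) (f : ℕ → ℕ) : ℕ → ℕ :=
  fun n => if h : n < a.length then a.get ⟨n, h⟩ else f (n - a.length)

theorem branchPrefix_ext_le (a : List ℕ) (f : ℕ → ℕ) {n : ℕ} (hn : n ≤ a.length) :
    branchPrefix (extBranch a f) n = a.take n := by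
  apply List.ext_getElem
  · simp [branchPrefix]; omega
  · intro i h1 h2
    have hi : i < n := by simpa [branchPrefix] using h1
    have hia : i < a.length := lt_of_lt_of_le hi hn
    simp [branchPrefix, extBranch, hi, hia]

theorem branchPrefix_ext (a : List ℕ) (f : ℕ → ℕ) (n : ℕ) :
    branchPrefix (extBranch a f) (a.length + n) = a ++ branchPrefix f n := by
  induction n with
  | zero =>
      simpa [branchPrefix] using
        (by rw [branchPrefix_ext_le a f le_rfl, List.take_length] :
          branchPrefix (extBranch a f) a.length = a)
  | succ n ih =>
      have h : a.length + (n + 1) = (a.length + n) + 1 := rfl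
      rw [h, branchPrefix_succ, ih, branchPrefix_succ, List.append_assoc]
      congr 2
      simp [extBranch, Nat.add_sub_cancel_left]

theorem sub_isProof {π : PreProof} (h : π.IsProof) {a : List ℕ} (ha : π.dom a) :
    (π.sub a).IsProof := by
  obtain ⟨w, pc, α, ord, hord0, hord⟩ := h
  refine ⟨⟨?_, ?_, ?_, ?_, ?_, ?_⟩, ?_, ord (a ++ []), fun b => ord (a ++ b), rfl, ?_⟩
  · show π.dom (a ++ []); simpa using ha
  · intro b i hd
    show π.dom (a ++ b)
    have := w.prefixClosed (a ++ b) i (by rw [List.append_assoc]; exact hd)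
    exact this
  · intro b t hb i
    have := w.arity (a ++ b) t hb i
    rw [List.append_assoc] at this; exact this
  · intro b t i ti hb hbi
    exact w.coherent (a ++ b) t i ti hb (by rw [List.append_assoc]; exact hbi)
  · intro b t hb; exact w.seqOk _ _ hb
  · intro b t hb; exact w.side _ _ hb
  · -- progress condition
    intro f hf N
    have hb : π.IsBranch (extBranch a f) := by
      intro n
      rcases le_or_gt n a.length with hle | hlt
      · rw [branchPrefix_ext_le a f hle]
        exact dom_of_prefix w (List.take_prefix _ _) ha
      · have : n = a.length + (n - a.length) := by omega
        rw [this, branchPrefix_ext]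
        exact hf _
    obtain ⟨m, hm, t, ht, hpw⟩ := pc (extBranch a f) hb (a.length + N)
    refine ⟨m - a.length, by omega, t, ?_, ?_⟩
    · have hm' : m = a.length + (m - a.length) := by omega
      rw [hm', branchPrefix_ext] at ht
      exact ht
    · have : extBranch a f m = f (m - a.length) := by
        simp [extBranch]; intro h'; omega
      rwa [this] at hpw
  · intro b t i hb hd
    have := hord (a ++ b) t i hb (by rw [List.append_assoc]; exact hd)
    simpa [List.append_assoc] using this

theorem sub_cutFree {π : PreProof} (h : π.CutFree) (a : List ℕ) : (π.sub a).CutFree :=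
  fun b t hb => h (a ++ b) t hb

end PreProof
namespace PreProof

theorem wf_of_no_chain {α : Type*} (R : α → α → Prop)
    (h : ∀ f : ℕ → α, ¬∀ n, R (f (n + 1)) (f n)) : WellFounded R := by
  by_contra hwf
  have hx : ∃ x, ¬Acc R x := by
    by_contra h'
    push_neg at h'
    exact hwf ⟨h'⟩
  have step : ∀ x, ¬Acc R x → ∃ y, ¬Acc R y ∧ R y x := by
    intro x hx'
    by_contra h'
    push_neg at h'
    exact hx' (Acc.intro x fun y hy => not_not.mp (fun hn => h' y hn hy))
  classical
  obtain ⟨x, hx⟩ := hx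
  let F : {z : α // ¬Acc R z} → {z : α // ¬Acc R z} := fun p =>
    ⟨(step p.1 p.2).choose, (step p.1 p.2).choose_spec.1⟩
  let f : ℕ → {z : α // ¬Acc R z} := fun n => F^[n] ⟨x, hx⟩
  apply h (fun n => (f n).1)
  intro n
  have : f (n + 1) = F (f n) := Function.iterate_succ_apply' F n _
  rw [this]
  exact (step (f n).1 (f n).2).choose_spec.2

/-- The local-child relation: `σ` is an immediate non-witness non-progress subproof
of the proof `ρ`. -/
def LocRel (σ ρ : PreProof) : Prop :=
  ρ.IsProof ∧ ∃ i t, ρ.label [] = some t ∧ t.witness i = false ∧ t.progress i = false ∧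
    ρ.dom [i] ∧ σ = ρ.sub [i]

theorem locRel_wf : WellFounded LocRel := by
  apply wf_of_no_chain
  intro f hf
  obtain ⟨hp0, _⟩ := hf 0
  classical
  -- the data of each step
  have hstep : ∀ n, ∃ i t, (f n).label [] = some t ∧ t.witness i = false ∧
      t.progress i = false ∧ (f n).dom [i] ∧ f (n + 1) = (f n).sub [i] :=
    fun n => (hf n).2
  choose I T hT hW hP hD hS using hstep
  -- addresses
  let A : ℕ → List ℕ := fun n => Nat.rec [] (fun m a => a ++ [I m]) n
  have hA : ∀ n, f n = (f 0).sub (A n) := by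
    intro n
    induction n with
    | zero =>
        show f 0 = (f 0).sub []
        cases h0 : f 0
        show _ = PreProof.mk _
        congr 1
    | succ n ih =>
        rw [hS n, ih, sub_sub]
  have hbp : ∀ n, branchPrefix I n = A n := by
    intro n
    induction n with
    | zero => rfl
    | succ n ih => rw [branchPrefix_succ, ih]
  have hbr : (f 0).IsBranch I := by
    intro n
    rw [hbp]
    induction n with
    | zero => exact hp0.1.root
    | succ n _ =>
        show (f 0).dom (A n ++ [I n])
        have := hD n
        rw [hA n] at this
        exact this
  obtain ⟨m, _, t, ht, hpw⟩ := hp0.2.1 I hbr 0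
  rw [hbp] at ht
  have : (f m).label [] = some t := by
    rw [hA m]; show (f 0).label (A m ++ []) = some t; simpa using ht
  rw [hT m] at this
  cases this
  rcases hpw with h | h
  · rw [hP m] at h; exact Bool.false_ne_true h
  · rw [hW m] at h; exact Bool.false_ne_true h

/-- A proof of `t.prem i` hangs at child `i` of the root. -/
theorem childProof {π : PreProof} (h : π.IsProof) {t : Tag} (ht : π.label [] = some t)
    {i : ℕ} (hi : i < t.arity) :
    π.dom [i] ∧ (π.sub [i]).IsProof ∧ (π.sub [i]).Concl (t.prem i) := by
  have hd : π.dom [i] := by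
    have := (h.1.arity [] t ht i).mpr hi
    simpa using this
  refine ⟨hd, sub_isProof h hd, ?_⟩
  obtain ⟨ti, hti⟩ := Option.ne_none_iff_exists'.mp hd
  refine ⟨ti, hti, ?_⟩
  exact h.1.coherent [] t i ti ht (by simpa using hti)

/-- Induction over the local fragment of proofs. -/
theorem localInd (P : PreProof → Prop)
    (step : ∀ ρ, ρ.IsProof → ρ.CutFree →
      (∀ i t, ρ.label [] = some t → t.witness i = false → t.progress i = false →
        i < t.arity → P (ρ.sub [i])) → P ρ) :
    ∀ ρ, ρ.IsProof → ρ.CutFree → P ρ := by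
  intro ρ
  induction ρ using locRel_wf.induction with
  | _ ρ IH =>
    intro hp hcf
    apply step ρ hp hcf
    intro i t ht hw hpr hi
    have hd : ρ.dom [i] := (childProof hp ht hi).1
    exact IH (ρ.sub [i]) ⟨hp, i, t, ht, hw, hpr, hd, rfl⟩ (sub_isProof hp hd) (sub_cutFree hcf _)

end PreProof
namespace PreProof

/-- No witness edge on the path to `b`. -/
def NoWitTo (ρ : PreProof) (b : List ℕ) : Prop :=
  ∀ c i tc, (c ++ [i]) <+: b → ρ.label c = some tc → tc.witness i = false

theorem noWitTo_of_prefix {ρ : PreProof} {b c : List ℕ} (h : ρ.NoWitTo b) (hp : c <+: b) :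
    ρ.NoWitTo c := fun d i td hd hl => h d i td (hd.trans hp) hl

theorem noWitTo_nil (ρ : PreProof) : ρ.NoWitTo [] := by
  intro c i tc hp _
  have := List.prefix_nil.mp hp
  simp at this

theorem ord_eq_of_noWitTo {ρ : PreProof} (w : ρ.Wf) {ord : List ℕ → Ordinal.{0}}
    (hord : ∀ a t (i : ℕ), ρ.label a = some t → ρ.dom (a ++ [i]) →
      (t.witness i = true → ord (a ++ [i]) < ord a) ∧
      (t.witness i = false → ord (a ++ [i]) = ord a)) :
    ∀ a, ρ.NoWitTo a → ρ.dom a → ord a = ord [] := by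
  intro a
  induction a using List.reverseRecOn with
  | nil => intro _ _; rfl
  | append_singleton a i ih =>
      intro hnw hd
      have hda : ρ.dom a := w.prefixClosed a i hd
      obtain ⟨ta, hta⟩ := Option.ne_none_iff_exists'.mp hda
      have hwit : ta.witness i = false := hnw a i ta (List.prefix_refl _) hta
      have := (hord a ta i hta hd).2 hwit
      rw [this]
      exact ih (noWitTo_of_prefix hnw (List.prefix_append _ _)) hda

theorem ordRaise {ρ : PreProof} (w : ρ.Wf) {α β : Ordinal.{0}} (h : ρ.OrdOk α)
    (hle : α ≤ β) : ρ.OrdOk β := by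
  classical
  obtain ⟨ord, h0, hord⟩ := h
  refine ⟨fun b => if ρ.NoWitTo b then β else ord b, by simp [noWitTo_nil], ?_⟩
  intro a t i ht hd
  constructor
  · intro hwit
    show (if ρ.NoWitTo (a ++ [i]) then β else ord (a ++ [i])) <
      (if ρ.NoWitTo a then β else ord a)
    have hnw' : ¬ ρ.NoWitTo (a ++ [i]) := by
      intro hc
      have := hc a i t (List.prefix_refl _) ht
      rw [hwit] at this
      exact Bool.true_eq_false.mp this
    rw [if_neg hnw']
    by_cases hnw : ρ.NoWitTo a
    · rw [if_pos hnw]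
      have h1 : ord a = α := by
        rw [ord_eq_of_noWitTo w hord a hnw (Option.ne_none_iff_exists'.mpr ⟨t, ht⟩), h0]
      calc ord (a ++ [i]) < ord a := (hord a t i ht hd).1 hwit
        _ = α := h1
        _ ≤ β := hle
    · rw [if_neg hnw]
      exact (hord a t i ht hd).1 hwit
  · intro hwit
    show (if ρ.NoWitTo (a ++ [i]) then β else ord (a ++ [i])) =
      (if ρ.NoWitTo a then β else ord a)
    have hiff : ρ.NoWitTo (a ++ [i]) ↔ ρ.NoWitTo a := by
      constructor
      · intro hc; exact noWitTo_of_prefix hc (List.prefix_append _ _)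
      · intro hc c j tc hp hl
        rcases List.prefix_concat_iff.mp hp with heq | hpp
        · obtain ⟨hc1, hc2⟩ := List.append_inj' heq rfl
          cases hc1
          cases List.head_eq_of_cons_eq hc2
          rw [ht] at hl
          cases hl
          exact hwit
        · exact hc c j tc hpp hl
    by_cases hnw : ρ.NoWitTo a
    · rw [if_pos hnw, if_pos (hiff.mpr hnw)]
    · rw [if_neg hnw, if_neg (fun hc => hnw (hiff.mp hc))]
      exact (hord a t i ht hd).2 hwit

theorem arity_le_two (t : Tag) : t.arity ≤ 2 := by
  cases t <;> simp [Tag.arity]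

/-- Glue subproofs under a root tag. -/
def glue (t : Tag) (ps : ℕ → PreProof) : PreProof :=
  ⟨fun a => match a with
    | [] => some t
    | i :: b => if i < t.arity then (ps i).label b else none⟩

theorem glue_label_nil (t : Tag) (ps : ℕ → PreProof) : (glue t ps).label [] = some t := rfl

theorem glue_label_cons (t : Tag) (ps : ℕ → PreProof) (i : ℕ) (b : List ℕ) :
    (glue t ps).label (i :: b) = if i < t.arity then (ps i).label b else none := rfl

theorem glue_dom_cons (t : Tag) (ps : ℕ → PreProof) (i : ℕ) (b : List ℕ) :
    (glue t ps).dom (i :: b) ↔ i < t.arity ∧ (ps i).dom b := by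
  unfold dom
  rw [glue_label_cons]
  split
  · next h => simp [h, dom]
  · next h => simp [h]

theorem glue_provable (t : Tag) (hnc : ¬ t.isCut) (hok : t.concl.ok) (hside : t.sideOk)
    (ps : ℕ → PreProof)
    (hp : ∀ i, i < t.arity → (ps i).IsProof ∧ (ps i).CutFree ∧ (ps i).Concl (t.prem i)) :
    ∃ π : PreProof, π.IsProof ∧ π.CutFree ∧ π.Concl t.concl := by
  classical
  refine ⟨glue t ps, ⟨⟨?_, ?_, ?_, ?_, ?_, ?_⟩, ?_, ?_⟩, ?_, t, rfl, rfl⟩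
  · -- root
    intro h
    simp [glue_label_nil] at h
  · -- prefixClosed
    intro a i hd
    cases a with
    | nil => intro h; simp [glue_label_nil] at h
    | cons j b =>
        have hd' : (glue t ps).dom (j :: (b ++ [i])) := hd
        rw [glue_dom_cons] at hd'
        rw [glue_dom_cons]
        exact ⟨hd'.1, (hp j hd'.1).1.1.prefixClosed b i hd'.2⟩
  · -- arity
    intro a t' ht' i
    cases a with
    | nil =>
        rw [glue_label_nil] at ht'
        cases ht'
        show (glue t ps).dom (i :: []) ↔ i < t.arity
        rw [glue_dom_cons]
        constructor
        · exact fun h => h.1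
        · intro h; exact ⟨h, (hp i h).1.1.root⟩
    | cons j b =>
        rw [glue_label_cons] at ht'
        by_cases hj : j < t.arity
        · rw [if_pos hj] at ht'
          show (glue t ps).dom (j :: (b ++ [i])) ↔ _
          rw [glue_dom_cons]
          have := (hp j hj).1.1.arity b t' ht' i
          simp [hj, this]
        · rw [if_neg hj] at ht'; cases ht'
  · -- coherent
    intro a t' i ti ht' hti
    cases a with
    | nil =>
        rw [glue_label_nil] at ht'
        cases ht'
        have hti' : (glue t ps).label (i :: []) = some ti := hti
        rw [glue_label_cons] at hti'
        by_cases hi : i < t.arity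
        · rw [if_pos hi] at hti'
          obtain ⟨t'', ht'', hc⟩ := (hp i hi).2.2
          rw [ht''] at hti'
          cases hti'
          exact hc
        · rw [if_neg hi] at hti'; cases hti'
    | cons j b =>
        rw [glue_label_cons] at ht'
        by_cases hj : j < t.arity
        · rw [if_pos hj] at ht'
          have hti' : (glue t ps).label (j :: (b ++ [i])) = some ti := hti
          rw [glue_label_cons, if_pos hj] at hti'
          exact (hp j hj).1.1.coherent b t' i ti ht' hti'
        · rw [if_neg hj] at ht'; cases ht'
  · -- seqOk
    intro a t' ht'
    cases a with
    | nil => rw [glue_label_nil] at ht'; cases ht'; exact hok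
    | cons j b =>
        rw [glue_label_cons] at ht'
        by_cases hj : j < t.arity
        · rw [if_pos hj] at ht'
          exact (hp j hj).1.1.seqOk b t' ht'
        · rw [if_neg hj] at ht'; cases ht'
  · -- side
    intro a t' ht'
    cases a with
    | nil => rw [glue_label_nil] at ht'; cases ht'; exact hside
    | cons j b =>
        rw [glue_label_cons] at ht'
        by_cases hj : j < t.arity
        · rw [if_pos hj] at ht'
          exact (hp j hj).1.1.side b t' ht'
        · rw [if_neg hj] at ht'; cases ht'
  · -- progress
    intro f hf N
    have h1 : (glue t ps).dom (branchPrefix f 1) := hf 1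
    have hbp1 : branchPrefix f 1 = [f 0] := by simp [branchPrefix, List.range_succ]
    rw [hbp1, show ([f 0] : List ℕ) = f 0 :: [] from rfl, glue_dom_cons] at h1
    set j := f 0 with hj0
    have hj : j < t.arity := h1.1
    set g : ℕ → ℕ := fun n => f (n + 1) with hg
    have hcons : ∀ n, branchPrefix f (n + 1) = j :: branchPrefix g n := by
      intro n
      show (List.range (n + 1)).map f = _
      rw [List.range_succ_eq_map, List.map_cons, List.map_map]
      rfl
    have hbr : (ps j).IsBranch g := by
      intro n
      have := hf (n + 1)
      rw [hcons n, glue_dom_cons] at this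
      exact this.2
    obtain ⟨n, hn, t', ht', hpw⟩ := (hp j hj).1.2.1 g hbr N
    refine ⟨n + 1, by omega, t', ?_, ?_⟩
    · rw [hcons n, glue_label_cons, if_pos hj]
      exact ht'
    · exact hpw
  · -- OrdOk
    set αf : ℕ → Ordinal.{0} := fun i =>
      if h : i < t.arity then ((hp i h).1.2.2).choose else 0 with hαf
    set β : Ordinal.{0} := αf 0 ⊔ αf 1 with hβ
    have hble : ∀ i, i < t.arity → αf i ≤ β := by
      intro i hi
      have h2 := arity_le_two t
      have : i = 0 ∨ i = 1 := by omega
      rcases this with h | h <;> subst h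
      · exact le_sup_left
      · exact le_sup_right
    have hraised : ∀ i (hi : i < t.arity),
        (ps i).OrdOk (if t.witness i = true then β else β + 1) := by
      intro i hi
      have hbase : (ps i).OrdOk (αf i) := by
        rw [hαf]; simp only [hi, dif_pos]
        exact ((hp i hi).1.2.2).choose_spec
      apply ordRaise (hp i hi).1.1 hbase
      split
      · exact hble i hi
      · exact le_trans (hble i hi) (le_of_lt (Order.lt_succ β))
    refine ⟨β + 1, fun a => match a with
      | [] => β + 1
      | i :: b => if h : i < t.arity then (hraised i h).choose b else 0, rfl, ?_⟩
    intro a t' i ht' hd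
    cases a with
    | nil =>
        rw [glue_label_nil] at ht'
        cases ht'
        have hd' : (glue t ps).dom (i :: []) := by simpa using hd
        rw [glue_dom_cons] at hd'
        have hi := hd'.1
        have hspec := (hraised i hi).choose_spec
        show (t.witness i = true →
            (if h : i < t.arity then (hraised i h).choose [] else 0) < β + 1) ∧
          (t.witness i = false →
            (if h : i < t.arity then (hraised i h).choose [] else 0) = β + 1)
        rw [dif_pos hi]
        have h0 : (hraised i hi).choose [] = if t.witness i = true then β else β + 1 :=
          hspec.1
        constructor
        · intro hw; rw [h0, if_pos hw]; exact Order.lt_succ β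
        · intro hw
          rw [h0, if_neg (by rw [hw]; exact Bool.false_ne_true)]
    | cons j b =>
        rw [glue_label_cons] at ht'
        by_cases hj : j < t.arity
        · rw [if_pos hj] at ht'
          have hd' : (glue t ps).dom (j :: (b ++ [i])) := hd
          rw [glue_dom_cons] at hd'
          have hspec := (hraised j hj).choose_spec
          have hthis := hspec.2 b t' i ht' hd'.2
          show (t'.witness i = true →
              (if h : j < t.arity then (hraised j h).choose (b ++ [i]) else 0) <
                (if h : j < t.arity then (hraised j h).choose b else 0)) ∧
            (t'.witness i = false →
              (if h : j < t.arity then (hraised j h).choose (b ++ [i]) else 0) =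
                (if h : j < t.arity then (hraised j h).choose b else 0))
          rw [dif_pos hj, dif_pos hj]
          exact hthis
        · rw [if_neg hj] at ht'; cases ht'
  · -- cutfree
    intro a t' ht'
    cases a with
    | nil => rw [glue_label_nil] at ht'; cases ht'; exact hnc
    | cons j b =>
        rw [glue_label_cons] at ht'
        by_cases hj : j < t.arity
        · rw [if_pos hj] at ht'
          exact (hp j hj).2.1 b t' ht'
        · rw [if_neg hj] at ht'; cases ht'

end PreProof
open PreProof

theorem Sequent.mk_eq {a d : Msf} {b e : Ann} {c f : Msf}
    (h1 : a = d) (h2 : b = e) (h3 : c = f) : (⟨a, b, c⟩ : Sequent) = ⟨d, e, f⟩ := by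
  subst h1; subst h2; subst h3; rfl

/-- Cut-free provability of a sequent. -/
def ProvS (S : Sequent) : Prop := ∃ π : PreProof, π.IsProof ∧ π.CutFree ∧ π.Concl S

theorem provS_iff {Γ : Msf} {s : Ann} {Δ : Msf} : ProvS ⟨Γ, s, Δ⟩ ↔ Provable Γ s Δ :=
  Iff.rfl

theorem ProvS.ofEq {S S' : Sequent} (h : ProvS S) (e : S = S') : ProvS S' := e ▸ h

theorem ProvS.glue (t : Tag) (hnc : ¬ t.isCut) (hok : t.concl.ok) (hside : t.sideOk)
    (hp : ∀ i, i < t.arity → ProvS (t.prem i)) : ProvS t.concl := by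
  classical
  exact glue_provable t hnc hok hside
    (fun i => if h : i < t.arity then (hp i h).choose else ⟨fun _ => none⟩)
    (fun i hi => by simp only [dif_pos hi]; exact (hp i hi).choose_spec)

theorem childProvS {ρ : PreProof} (h : ρ.IsProof) (hcf : ρ.CutFree) {t : Tag}
    (ht : ρ.label [] = some t) {i : ℕ} (hi : i < t.arity) : ProvS (t.prem i) :=
  ⟨ρ.sub [i], (childProof h ht hi).2.1, sub_cutFree hcf _, (childProof h ht hi).2.2⟩

/-- Weakening. -/
theorem weak_aux : ∀ ρ : PreProof, ρ.IsProof → ρ.CutFree →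
    ∀ X s Y, ρ.Concl ⟨X, s, Y⟩ → ∀ X₀ Y₀, Provable (X + X₀) s (Y + Y₀) := by
  apply localInd
  intro ρ hp hcf IH X s Y hc X₀ Y₀
  obtain ⟨t, ht, hteq⟩ := hc
  have hok := hp.1.seqOk [] t ht
  have hside := hp.1.side [] t ht
  rw [hteq] at hok
  cases t with
  | ax Γa p Δa sa =>
      simp only [Tag.concl, Sequent.mk.injEq] at hteq
      obtain ⟨h1, h2, h3⟩ := hteq
      subst h2
      refine (ProvS.glue (.ax (Γa + X₀) p (Δa + Y₀) sa) (by simp [Tag.isCut]) ?_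
        (by simp [Tag.sideOk]) (by intro i hi; simp [Tag.arity] at hi)).ofEq
        (Sequent.mk_eq (by rw [← h1, Multiset.cons_add]) rfl (by rw [← h3, Multiset.cons_add]))
      intro ρ₀ hann
      have hann' : sa = Ann.fml ρ₀ := hann
      have hY : Fml.mbox ρ₀ ∈ Y := hok ρ₀ hann'
      rw [← h3] at hY
      show Fml.mbox ρ₀ ∈ Fml.var p ::ₘ (Δa + Y₀)
      rcases Multiset.mem_cons.mp hY with h | h
      · exact Multiset.mem_cons.mpr (Or.inl h)
      · exact Multiset.mem_cons.mpr (Or.inr (Multiset.mem_of_le (Multiset.le_add_right _ _) h))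
  | axBot Γa Δa sa =>
      simp only [Tag.concl, Sequent.mk.injEq] at hteq
      obtain ⟨h1, h2, h3⟩ := hteq
      subst h2
      refine (ProvS.glue (.axBot (Γa + X₀) (Δa + Y₀) sa) (by simp [Tag.isCut]) ?_
        (by simp [Tag.sideOk]) (by intro i hi; simp [Tag.arity] at hi)).ofEq
        (Sequent.mk_eq (by rw [← h1, Multiset.cons_add]) rfl (by rw [← h3]))
      intro ρ₀ hann
      have hann' : sa = Ann.fml ρ₀ := hann
      have hY : Fml.mbox ρ₀ ∈ Y := hok ρ₀ hann'
      rw [← h3] at hY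
      show Fml.mbox ρ₀ ∈ Δa + Y₀
      exact Multiset.mem_of_le (Multiset.le_add_right _ _) hY
  | impL Γa φ ψ Δa sa =>
      simp only [Tag.concl, Sequent.mk.injEq] at hteq
      obtain ⟨h1, h2, h3⟩ := hteq
      subst h2; subst h3
      have har0 : 0 < Tag.arity (.impL Γa φ ψ Δa sa) := by simp [Tag.arity]
      have har1 : 1 < Tag.arity (.impL Γa φ ψ Δa sa) := by simp [Tag.arity]
      have p0 : Provable (Γa + X₀) sa ((φ ::ₘ Δa) + Y₀) :=
        IH 0 _ ht rfl rfl har0 _ _ _ (childProof hp ht har0).2.2 X₀ Y₀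
      have p1 : Provable ((ψ ::ₘ Γa) + X₀) sa (Δa + Y₀) :=
        IH 1 _ ht rfl rfl har1 _ _ _ (childProof hp ht har1).2.2 X₀ Y₀
      refine (ProvS.glue (.impL (Γa + X₀) φ ψ (Δa + Y₀) sa) (by simp [Tag.isCut]) ?_
        (by simp [Tag.sideOk]) ?_).ofEq
        (Sequent.mk_eq (by rw [← h1, Multiset.cons_add]) rfl rfl)
      · intro ρ₀ hann
        have hann' : sa = Ann.fml ρ₀ := hann
        show Fml.mbox ρ₀ ∈ Δa + Y₀
        exact Multiset.mem_of_le (Multiset.le_add_right _ _) (hok ρ₀ hann')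
      · intro i hi
        have : i < 2 := hi
        interval_cases i
        · exact (provS_iff.mpr p0).ofEq
            (Sequent.mk_eq rfl rfl (Multiset.cons_add φ Δa Y₀))
        · exact (provS_iff.mpr p1).ofEq
            (Sequent.mk_eq (Multiset.cons_add ψ Γa X₀) rfl rfl)
  | impR Γa φ ψ Δa sa =>
      simp only [Tag.concl, Sequent.mk.injEq] at hteq
      obtain ⟨h1, h2, h3⟩ := hteq
      subst h1; subst h2
      have har0 : 0 < Tag.arity (.impR Γa φ ψ Δa sa) := by simp [Tag.arity]
      have p0 : Provable ((φ ::ₘ Γa) + X₀) sa ((ψ ::ₘ Δa) + Y₀) :=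
        IH 0 _ ht rfl rfl har0 _ _ _ (childProof hp ht har0).2.2 X₀ Y₀
      refine (ProvS.glue (.impR (Γa + X₀) φ ψ (Δa + Y₀) sa) (by simp [Tag.isCut]) ?_
        (by simp [Tag.sideOk]) ?_).ofEq
        (Sequent.mk_eq rfl rfl (by rw [← h3, Multiset.cons_add]))
      · intro ρ₀ hann
        have hann' : sa = Ann.fml ρ₀ := hann
        have hY : Fml.mbox ρ₀ ∈ Y := hok ρ₀ hann'
        rw [← h3] at hY
        show Fml.mbox ρ₀ ∈ Fml.imp φ ψ ::ₘ (Δa + Y₀)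
        rcases Multiset.mem_cons.mp hY with h | h
        · exact Multiset.mem_cons.mpr (Or.inl h)
        · exact Multiset.mem_cons.mpr (Or.inr (Multiset.mem_of_le (Multiset.le_add_right _ _) h))
      · intro i hi
        have : i < 1 := hi
        interval_cases i
        exact (provS_iff.mpr p0).ofEq
          (Sequent.mk_eq (Multiset.cons_add φ Γa X₀) rfl (Multiset.cons_add ψ Δa Y₀))
  | box Sg Γb P Δb φb sb =>
      simp only [Tag.concl, Sequent.mk.injEq] at hteq
      obtain ⟨h1, h2, h3⟩ := hteq
      subst h2
      refine (ProvS.glue (.box (Sg + X₀) Γb P (Δb + Y₀) φb sb) (by simp [Tag.isCut]) ?_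
        (by simp [Tag.sideOk]) ?_).ofEq
        (Sequent.mk_eq (by rw [← h1]; abel) rfl (by rw [← h3, Multiset.cons_add]))
      · intro ρ₀ hann
        have hann' : sb = Ann.fml ρ₀ := hann
        have hY : Fml.mbox ρ₀ ∈ Y := hok ρ₀ hann'
        rw [← h3] at hY
        show Fml.mbox ρ₀ ∈ Fml.box φb ::ₘ (Δb + Y₀)
        rcases Multiset.mem_cons.mp hY with h | h
        · exact Multiset.mem_cons.mpr (Or.inl h)
        · exact Multiset.mem_cons.mpr (Or.inr (Multiset.mem_of_le (Multiset.le_add_right _ _) h))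
      · intro i hi
        have : i < 1 := hi
        interval_cases i
        exact childProvS hp hcf ht (show 0 < Tag.arity (.box Sg Γb P Δb φb sb) by simp [Tag.arity])
  | mboxF Sg Γb P Δb φb =>
      simp only [Tag.concl, Sequent.mk.injEq] at hteq
      obtain ⟨h1, h2, h3⟩ := hteq
      subst h2
      refine (ProvS.glue (.mboxF (Sg + X₀) Γb P (Δb + Y₀) φb) (by simp [Tag.isCut]) ?_
        (by simp [Tag.sideOk]) ?_).ofEq
        (Sequent.mk_eq (by rw [← h1]; abel) rfl (by rw [← h3, Multiset.cons_add]))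
      · intro ρ₀ hann
        have hann' : Ann.fml φb = Ann.fml ρ₀ := hann
        cases hann'
        exact Multiset.mem_cons_self _ _
      · intro i hi
        have : i < 2 := hi
        interval_cases i
        · exact childProvS hp hcf ht (show 0 < Tag.arity (.mboxF Sg Γb P Δb φb) by simp [Tag.arity])
        · exact childProvS hp hcf ht (show 1 < Tag.arity (.mboxF Sg Γb P Δb φb) by simp [Tag.arity])
  | mboxU Sg Γb P Δb φb sb =>
      simp only [Tag.concl, Sequent.mk.injEq] at hteq
      obtain ⟨h1, h2, h3⟩ := hteq
      subst h2
      refine (ProvS.glue (.mboxU (Sg + X₀) Γb P (Δb + Y₀) φb sb) (by simp [Tag.isCut]) ?_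
        (by simpa [Tag.sideOk] using hside) ?_).ofEq
        (Sequent.mk_eq (by rw [← h1]; abel) rfl (by rw [← h3, Multiset.cons_add]))
      · intro ρ₀ hann
        have hann' : sb = Ann.fml ρ₀ := hann
        have hY : Fml.mbox ρ₀ ∈ Y := hok ρ₀ hann'
        rw [← h3] at hY
        show Fml.mbox ρ₀ ∈ Fml.mbox φb ::ₘ (Δb + Y₀)
        rcases Multiset.mem_cons.mp hY with h | h
        · exact Multiset.mem_cons.mpr (Or.inl h)
        · exact Multiset.mem_cons.mpr (Or.inr (Multiset.mem_of_le (Multiset.le_add_right _ _) h))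
      · intro i hi
        have : i < 2 := hi
        interval_cases i
        · exact childProvS hp hcf ht (show 0 < Tag.arity (.mboxU Sg Γb P Δb φb sb) by simp [Tag.arity])
        · exact childProvS hp hcf ht (show 1 < Tag.arity (.mboxU Sg Γb P Δb φb sb) by simp [Tag.arity])
  | cut Γc Δc χc sc =>
      exact absurd (hcf [] _ ht) (by simp [Tag.isCut])

theorem weak {X Y X' Y' : Msf} {s : Ann} (h : Provable X s Y) (hX : X ≤ X') (hY : Y ≤ Y') :
    Provable X' s Y' := by
  obtain ⟨X₀, rfl⟩ := Multiset.le_iff_exists_add.mp hX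
  obtain ⟨Y₀, rfl⟩ := Multiset.le_iff_exists_add.mp hY
  obtain ⟨ρ, hp, hcf, hc⟩ := h
  exact weak_aux ρ hp hcf X s Y hc X₀ Y₀
theorem PreProof.Concl.ofEq {π : PreProof} {S S' : Sequent} (h : π.Concl S) (e : S = S') :
    π.Concl S' := e ▸ h

theorem mem_of_mem_cons_ne {a b : Fml} {m : Msf} (h : a ∈ b ::ₘ m) (hne : a ≠ b) : a ∈ m := by
  rcases Multiset.mem_cons.mp h with h | h
  · exact absurd h hne
  · exact h

/-- Inversion of `→L`, first premise. -/
theorem invL0_aux : ∀ ρ : PreProof, ρ.IsProof → ρ.CutFree →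
    ∀ φ ψ X s Y, ρ.Concl ⟨Fml.imp φ ψ ::ₘ X, s, Y⟩ → Provable X s (φ ::ₘ Y) := by
  apply localInd
  intro ρ hp hcf IH φ ψ X s Y hc
  obtain ⟨t, ht, hteq⟩ := hc
  have hok := hp.1.seqOk [] t ht
  have hside := hp.1.side [] t ht
  rw [hteq] at hok
  have hokY : ∀ ρ₀, s = Ann.fml ρ₀ → Fml.mbox ρ₀ ∈ Y := fun ρ₀ h => hok ρ₀ h
  cases t with
  | ax Γa p Δa sa =>
      simp only [Tag.concl, Sequent.mk.injEq] at hteq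
      obtain ⟨h1, h2, h3⟩ := hteq
      subst h2
      rcases Multiset.cons_eq_cons.mp h1 with ⟨he, _⟩ | ⟨_, cs, hcs1, hcs2⟩
      · exact absurd he (by simp)
      refine (ProvS.glue (.ax cs p (φ ::ₘ Δa) sa) (by simp [Tag.isCut]) ?_
        (by simp [Tag.sideOk]) (by intro i hi; simp [Tag.arity] at hi)).ofEq
        (Sequent.mk_eq hcs2.symm rfl (by rw [← h3, Multiset.cons_swap]))
      intro ρ₀ hann
      have hY : Fml.mbox ρ₀ ∈ Y := hokY ρ₀ hann
      rw [← h3] at hY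
      show Fml.mbox ρ₀ ∈ Fml.var p ::ₘ (φ ::ₘ Δa)
      rcases Multiset.mem_cons.mp hY with h | h
      · exact Multiset.mem_cons.mpr (Or.inl h)
      · exact Multiset.mem_cons.mpr (Or.inr (Multiset.mem_cons.mpr (Or.inr h)))
  | axBot Γa Δa sa =>
      simp only [Tag.concl, Sequent.mk.injEq] at hteq
      obtain ⟨h1, h2, h3⟩ := hteq
      subst h2
      rcases Multiset.cons_eq_cons.mp h1 with ⟨he, _⟩ | ⟨_, cs, hcs1, hcs2⟩
      · exact absurd he (by simp)
      refine (ProvS.glue (.axBot cs (φ ::ₘ Y) sa) (by simp [Tag.isCut]) ?_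
        (by simp [Tag.sideOk]) (by intro i hi; simp [Tag.arity] at hi)).ofEq
        (Sequent.mk_eq hcs2.symm rfl rfl)
      intro ρ₀ hann
      exact Multiset.mem_cons.mpr (Or.inr (hokY ρ₀ hann))
  | impL Γa φ' ψ' Δa sa =>
      simp only [Tag.concl, Sequent.mk.injEq] at hteq
      obtain ⟨h1, h2, h3⟩ := hteq
      subst h2
      have har0 : 0 < Tag.arity (.impL Γa φ' ψ' Δa sa) := by simp [Tag.arity]
      have har1 : 1 < Tag.arity (.impL Γa φ' ψ' Δa sa) := by simp [Tag.arity]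
      rcases Multiset.cons_eq_cons.mp h1 with ⟨he, hrest⟩ | ⟨_, cs, hcs1, hcs2⟩
      · injection he with he1 he2
        subst he1; subst he2
        exact provS_iff.mp ((childProvS hp hcf ht har0).ofEq
          (Sequent.mk_eq hrest rfl (by rw [h3])))
      · have c0 : Provable cs sa (φ ::ₘ (φ' ::ₘ Y)) :=
          IH 0 _ ht rfl rfl har0 φ ψ cs sa (φ' ::ₘ Y)
            ((childProof hp ht har0).2.2.ofEq (Sequent.mk_eq hcs1 rfl (by rw [h3])))
        have c1 : Provable (ψ' ::ₘ cs) sa (φ ::ₘ Y) :=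
          IH 1 _ ht rfl rfl har1 φ ψ (ψ' ::ₘ cs) sa Y
            ((childProof hp ht har1).2.2.ofEq
              (Sequent.mk_eq (by rw [hcs1, Multiset.cons_swap]) rfl h3))
        refine (ProvS.glue (.impL cs φ' ψ' (φ ::ₘ Y) sa) (by simp [Tag.isCut]) ?_
          (by simp [Tag.sideOk]) ?_).ofEq
          (Sequent.mk_eq hcs2.symm rfl rfl)
        · intro ρ₀ hann
          exact Multiset.mem_cons.mpr (Or.inr (hokY ρ₀ hann))
        · intro i hi
          have : i < 2 := hi
          interval_cases i
          · exact (provS_iff.mpr c0).ofEq (Sequent.mk_eq rfl rfl (Multiset.cons_swap _ _ _))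
          · exact provS_iff.mpr c1
  | impR Γa φ' ψ' Δa sa =>
      simp only [Tag.concl, Sequent.mk.injEq] at hteq
      obtain ⟨h1, h2, h3⟩ := hteq
      subst h2
      have har0 : 0 < Tag.arity (.impR Γa φ' ψ' Δa sa) := by simp [Tag.arity]
      have c0 : Provable (φ' ::ₘ X) sa (φ ::ₘ (ψ' ::ₘ Δa)) :=
        IH 0 _ ht rfl rfl har0 φ ψ (φ' ::ₘ X) sa (ψ' ::ₘ Δa)
          ((childProof hp ht har0).2.2.ofEq
            (Sequent.mk_eq (by rw [h1, Multiset.cons_swap]) rfl rfl))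
      refine (ProvS.glue (.impR X φ' ψ' (φ ::ₘ Δa) sa) (by simp [Tag.isCut]) ?_
        (by simp [Tag.sideOk]) ?_).ofEq
        (Sequent.mk_eq rfl rfl (by rw [← h3, Multiset.cons_swap]))
      · intro ρ₀ hann
        have hY : Fml.mbox ρ₀ ∈ Y := hokY ρ₀ hann
        rw [← h3] at hY
        show Fml.mbox ρ₀ ∈ Fml.imp φ' ψ' ::ₘ (φ ::ₘ Δa)
        rcases Multiset.mem_cons.mp hY with h | h
        · exact Multiset.mem_cons.mpr (Or.inl h)
        · exact Multiset.mem_cons.mpr (Or.inr (Multiset.mem_cons.mpr (Or.inr h)))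
      · intro i hi
        have : i < 1 := hi
        interval_cases i
        exact (provS_iff.mpr c0).ofEq (Sequent.mk_eq rfl rfl (Multiset.cons_swap _ _ _))
  | box Sg Γb P Δb φb sb =>
      simp only [Tag.concl, Sequent.mk.injEq] at hteq
      obtain ⟨h1, h2, h3⟩ := hteq
      subst h2
      have hmem : Fml.imp φ ψ ∈ Sg := by
        have : Fml.imp φ ψ ∈ Sg + Γb.map Fml.box + P.map Fml.mbox := by
          rw [h1]; exact Multiset.mem_cons_self _ _
        rcases Multiset.mem_add.mp this with h | h
        · rcases Multiset.mem_add.mp h with h | h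
          · exact h
          · obtain ⟨b, _, hb⟩ := Multiset.mem_map.mp h
            exact absurd hb (by simp)
        · obtain ⟨b, _, hb⟩ := Multiset.mem_map.mp h
          exact absurd hb (by simp)
      obtain ⟨Sg', rfl⟩ := Multiset.exists_cons_of_mem hmem
      have hX : X = Sg' + Γb.map Fml.box + P.map Fml.mbox := by
        have : Fml.imp φ ψ ::ₘ (Sg' + Γb.map Fml.box + P.map Fml.mbox) =
            Fml.imp φ ψ ::ₘ X := by
          rw [← h1, Multiset.cons_add, Multiset.cons_add]
        exact ((Multiset.cons_inj_right _).mp this).symm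
      refine (ProvS.glue (.box Sg' Γb P (φ ::ₘ Δb) φb sb) (by simp [Tag.isCut]) ?_
        (by simp [Tag.sideOk]) ?_).ofEq
        (Sequent.mk_eq hX.symm rfl (by rw [← h3, Multiset.cons_swap]))
      · intro ρ₀ hann
        have hY : Fml.mbox ρ₀ ∈ Y := hokY ρ₀ hann
        rw [← h3] at hY
        show Fml.mbox ρ₀ ∈ Fml.box φb ::ₘ (φ ::ₘ Δb)
        rcases Multiset.mem_cons.mp hY with h | h
        · exact Multiset.mem_cons.mpr (Or.inl h)
        · exact Multiset.mem_cons.mpr (Or.inr (Multiset.mem_cons.mpr (Or.inr h)))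
      · intro i hi
        have : i < 1 := hi
        interval_cases i
        exact childProvS hp hcf ht
          (show 0 < Tag.arity (.box (Fml.imp φ ψ ::ₘ Sg') Γb P Δb φb sb) by simp [Tag.arity])
  | mboxF Sg Γb P Δb φb =>
      simp only [Tag.concl, Sequent.mk.injEq] at hteq
      obtain ⟨h1, h2, h3⟩ := hteq
      subst h2
      have hmem : Fml.imp φ ψ ∈ Sg := by
        have : Fml.imp φ ψ ∈ Sg + Γb.map Fml.box + P.map Fml.mbox := by
          rw [h1]; exact Multiset.mem_cons_self _ _
        rcases Multiset.mem_add.mp this with h | h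
        · rcases Multiset.mem_add.mp h with h | h
          · exact h
          · obtain ⟨b, _, hb⟩ := Multiset.mem_map.mp h
            exact absurd hb (by simp)
        · obtain ⟨b, _, hb⟩ := Multiset.mem_map.mp h
          exact absurd hb (by simp)
      obtain ⟨Sg', rfl⟩ := Multiset.exists_cons_of_mem hmem
      have hX : X = Sg' + Γb.map Fml.box + P.map Fml.mbox := by
        have : Fml.imp φ ψ ::ₘ (Sg' + Γb.map Fml.box + P.map Fml.mbox) =
            Fml.imp φ ψ ::ₘ X := by
          rw [← h1, Multiset.cons_add, Multiset.cons_add]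
        exact ((Multiset.cons_inj_right _).mp this).symm
      refine (ProvS.glue (.mboxF Sg' Γb P (φ ::ₘ Δb) φb) (by simp [Tag.isCut]) ?_
        (by simp [Tag.sideOk]) ?_).ofEq
        (Sequent.mk_eq hX.symm rfl (by rw [← h3, Multiset.cons_swap]))
      · intro ρ₀ hann
        have hann' : Ann.fml φb = Ann.fml ρ₀ := hann
        cases hann'
        exact Multiset.mem_cons_self _ _
      · intro i hi
        have : i < 2 := hi
        interval_cases i
        · exact childProvS hp hcf ht
            (show 0 < Tag.arity (.mboxF (Fml.imp φ ψ ::ₘ Sg') Γb P Δb φb) by simp [Tag.arity])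
        · exact childProvS hp hcf ht
            (show 1 < Tag.arity (.mboxF (Fml.imp φ ψ ::ₘ Sg') Γb P Δb φb) by simp [Tag.arity])
  | mboxU Sg Γb P Δb φb sb =>
      simp only [Tag.concl, Sequent.mk.injEq] at hteq
      obtain ⟨h1, h2, h3⟩ := hteq
      subst h2
      have hmem : Fml.imp φ ψ ∈ Sg := by
        have : Fml.imp φ ψ ∈ Sg + Γb.map Fml.box + P.map Fml.mbox := by
          rw [h1]; exact Multiset.mem_cons_self _ _
        rcases Multiset.mem_add.mp this with h | h
        · rcases Multiset.mem_add.mp h with h | h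
          · exact h
          · obtain ⟨b, _, hb⟩ := Multiset.mem_map.mp h
            exact absurd hb (by simp)
        · obtain ⟨b, _, hb⟩ := Multiset.mem_map.mp h
          exact absurd hb (by simp)
      obtain ⟨Sg', rfl⟩ := Multiset.exists_cons_of_mem hmem
      have hX : X = Sg' + Γb.map Fml.box + P.map Fml.mbox := by
        have : Fml.imp φ ψ ::ₘ (Sg' + Γb.map Fml.box + P.map Fml.mbox) =
            Fml.imp φ ψ ::ₘ X := by
          rw [← h1, Multiset.cons_add, Multiset.cons_add]
        exact ((Multiset.cons_inj_right _).mp this).symm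
      refine (ProvS.glue (.mboxU Sg' Γb P (φ ::ₘ Δb) φb sb) (by simp [Tag.isCut]) ?_
        (by simpa [Tag.sideOk] using hside) ?_).ofEq
        (Sequent.mk_eq hX.symm rfl (by rw [← h3, Multiset.cons_swap]))
      · intro ρ₀ hann
        have hY : Fml.mbox ρ₀ ∈ Y := hokY ρ₀ hann
        rw [← h3] at hY
        show Fml.mbox ρ₀ ∈ Fml.mbox φb ::ₘ (φ ::ₘ Δb)
        rcases Multiset.mem_cons.mp hY with h | h
        · exact Multiset.mem_cons.mpr (Or.inl h)
        · exact Multiset.mem_cons.mpr (Or.inr (Multiset.mem_cons.mpr (Or.inr h)))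
      · intro i hi
        have : i < 2 := hi
        interval_cases i
        · exact childProvS hp hcf ht
            (show 0 < Tag.arity (.mboxU (Fml.imp φ ψ ::ₘ Sg') Γb P Δb φb sb) by simp [Tag.arity])
        · exact childProvS hp hcf ht
            (show 1 < Tag.arity (.mboxU (Fml.imp φ ψ ::ₘ Sg') Γb P Δb φb sb) by simp [Tag.arity])
  | cut Γc Δc χc sc =>
      exact absurd (hcf [] _ ht) (by simp [Tag.isCut])

theorem invL0 {φ ψ : Fml} {X Y : Msf} {s : Ann} (h : Provable (Fml.imp φ ψ ::ₘ X) s Y) :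
    Provable X s (φ ::ₘ Y) := by
  obtain ⟨ρ, hp, hcf, hc⟩ := h
  exact invL0_aux ρ hp hcf φ ψ X s Y hc
/-- Inversion of `→L`, second premise. -/
theorem invL1_aux : ∀ ρ : PreProof, ρ.IsProof → ρ.CutFree →
    ∀ φ ψ X s Y, ρ.Concl ⟨Fml.imp φ ψ ::ₘ X, s, Y⟩ → Provable (ψ ::ₘ X) s Y := by
  apply localInd
  intro ρ hp hcf IH φ ψ X s Y hc
  obtain ⟨t, ht, hteq⟩ := hc
  have hok := hp.1.seqOk [] t ht
  have hside := hp.1.side [] t ht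
  rw [hteq] at hok
  have hokY : ∀ ρ₀, s = Ann.fml ρ₀ → Fml.mbox ρ₀ ∈ Y := fun ρ₀ h => hok ρ₀ h
  cases t with
  | ax Γa p Δa sa =>
      simp only [Tag.concl, Sequent.mk.injEq] at hteq
      obtain ⟨h1, h2, h3⟩ := hteq
      subst h2
      rcases Multiset.cons_eq_cons.mp h1 with ⟨he, _⟩ | ⟨_, cs, hcs1, hcs2⟩
      · exact absurd he (by simp)
      refine (ProvS.glue (.ax (ψ ::ₘ cs) p Δa sa) (by simp [Tag.isCut]) ?_
        (by simp [Tag.sideOk]) (by intro i hi; simp [Tag.arity] at hi)).ofEq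
        (Sequent.mk_eq (by rw [hcs2]; exact Multiset.cons_swap _ _ _) rfl h3)
      intro ρ₀ hann
      have hY : Fml.mbox ρ₀ ∈ Y := hokY ρ₀ hann
      rw [← h3] at hY
      exact hY
  | axBot Γa Δa sa =>
      simp only [Tag.concl, Sequent.mk.injEq] at hteq
      obtain ⟨h1, h2, h3⟩ := hteq
      subst h2
      rcases Multiset.cons_eq_cons.mp h1 with ⟨he, _⟩ | ⟨_, cs, hcs1, hcs2⟩
      · exact absurd he (by simp)
      refine (ProvS.glue (.axBot (ψ ::ₘ cs) Y sa) (by simp [Tag.isCut]) ?_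
        (by simp [Tag.sideOk]) (by intro i hi; simp [Tag.arity] at hi)).ofEq
        (Sequent.mk_eq (by rw [hcs2]; exact Multiset.cons_swap _ _ _) rfl rfl)
      intro ρ₀ hann
      exact hokY ρ₀ hann
  | impL Γa φ' ψ' Δa sa =>
      simp only [Tag.concl, Sequent.mk.injEq] at hteq
      obtain ⟨h1, h2, h3⟩ := hteq
      subst h2
      have har0 : 0 < Tag.arity (.impL Γa φ' ψ' Δa sa) := by simp [Tag.arity]
      have har1 : 1 < Tag.arity (.impL Γa φ' ψ' Δa sa) := by simp [Tag.arity]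
      rcases Multiset.cons_eq_cons.mp h1 with ⟨he, hrest⟩ | ⟨_, cs, hcs1, hcs2⟩
      · injection he with he1 he2
        subst he1; subst he2
        exact provS_iff.mp ((childProvS hp hcf ht har1).ofEq
          (Sequent.mk_eq (by rw [hrest]) rfl (by rw [h3])))
      · have c0 : Provable (ψ ::ₘ cs) sa (φ' ::ₘ Y) :=
          IH 0 _ ht rfl rfl har0 φ ψ cs sa (φ' ::ₘ Y)
            ((childProof hp ht har0).2.2.ofEq (Sequent.mk_eq hcs1 rfl (by rw [h3])))
        have c1 : Provable (ψ ::ₘ (ψ' ::ₘ cs)) sa Y :=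
          IH 1 _ ht rfl rfl har1 φ ψ (ψ' ::ₘ cs) sa Y
            ((childProof hp ht har1).2.2.ofEq
              (Sequent.mk_eq (by rw [hcs1, Multiset.cons_swap]) rfl h3))
        refine (ProvS.glue (.impL (ψ ::ₘ cs) φ' ψ' Y sa) (by simp [Tag.isCut]) ?_
          (by simp [Tag.sideOk]) ?_).ofEq
          (Sequent.mk_eq (by rw [hcs2]; exact Multiset.cons_swap _ _ _) rfl rfl)
        · intro ρ₀ hann
          exact hokY ρ₀ hann
        · intro i hi
          have : i < 2 := hi
          interval_cases i
          · exact provS_iff.mpr c0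
          · exact (provS_iff.mpr c1).ofEq (Sequent.mk_eq (Multiset.cons_swap _ _ _) rfl rfl)
  | impR Γa φ' ψ' Δa sa =>
      simp only [Tag.concl, Sequent.mk.injEq] at hteq
      obtain ⟨h1, h2, h3⟩ := hteq
      subst h2
      have har0 : 0 < Tag.arity (.impR Γa φ' ψ' Δa sa) := by simp [Tag.arity]
      have c0 : Provable (ψ ::ₘ (φ' ::ₘ X)) sa (ψ' ::ₘ Δa) :=
        IH 0 _ ht rfl rfl har0 φ ψ (φ' ::ₘ X) sa (ψ' ::ₘ Δa)
          ((childProof hp ht har0).2.2.ofEq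
            (Sequent.mk_eq (by rw [h1, Multiset.cons_swap]) rfl rfl))
      refine (ProvS.glue (.impR (ψ ::ₘ X) φ' ψ' Δa sa) (by simp [Tag.isCut]) ?_
        (by simp [Tag.sideOk]) ?_).ofEq
        (Sequent.mk_eq rfl rfl h3)
      · intro ρ₀ hann
        have hY : Fml.mbox ρ₀ ∈ Y := hokY ρ₀ hann
        rw [← h3] at hY
        exact hY
      · intro i hi
        have : i < 1 := hi
        interval_cases i
        exact (provS_iff.mpr c0).ofEq (Sequent.mk_eq (Multiset.cons_swap _ _ _) rfl rfl)
  | box Sg Γb P Δb φb sb =>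
      simp only [Tag.concl, Sequent.mk.injEq] at hteq
      obtain ⟨h1, h2, h3⟩ := hteq
      subst h2
      have hmem : Fml.imp φ ψ ∈ Sg := by
        have : Fml.imp φ ψ ∈ Sg + Γb.map Fml.box + P.map Fml.mbox := by
          rw [h1]; exact Multiset.mem_cons_self _ _
        rcases Multiset.mem_add.mp this with h | h
        · rcases Multiset.mem_add.mp h with h | h
          · exact h
          · obtain ⟨b, _, hb⟩ := Multiset.mem_map.mp h
            exact absurd hb (by simp)
        · obtain ⟨b, _, hb⟩ := Multiset.mem_map.mp h
          exact absurd hb (by simp)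
      obtain ⟨Sg', rfl⟩ := Multiset.exists_cons_of_mem hmem
      have hX : X = Sg' + Γb.map Fml.box + P.map Fml.mbox := by
        have : Fml.imp φ ψ ::ₘ (Sg' + Γb.map Fml.box + P.map Fml.mbox) =
            Fml.imp φ ψ ::ₘ X := by
          rw [← h1, Multiset.cons_add, Multiset.cons_add]
        exact ((Multiset.cons_inj_right _).mp this).symm
      refine (ProvS.glue (.box (ψ ::ₘ Sg') Γb P Δb φb sb) (by simp [Tag.isCut]) ?_
        (by simp [Tag.sideOk]) ?_).ofEq
        (Sequent.mk_eq (by rw [hX, Multiset.cons_add, Multiset.cons_add]) rfl h3)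
      · intro ρ₀ hann
        have hY : Fml.mbox ρ₀ ∈ Y := hokY ρ₀ hann
        rw [← h3] at hY
        exact hY
      · intro i hi
        have : i < 1 := hi
        interval_cases i
        exact childProvS hp hcf ht
          (show 0 < Tag.arity (.box (Fml.imp φ ψ ::ₘ Sg') Γb P Δb φb sb) by simp [Tag.arity])
  | mboxF Sg Γb P Δb φb =>
      simp only [Tag.concl, Sequent.mk.injEq] at hteq
      obtain ⟨h1, h2, h3⟩ := hteq
      subst h2
      have hmem : Fml.imp φ ψ ∈ Sg := by
        have : Fml.imp φ ψ ∈ Sg + Γb.map Fml.box + P.map Fml.mbox := by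
          rw [h1]; exact Multiset.mem_cons_self _ _
        rcases Multiset.mem_add.mp this with h | h
        · rcases Multiset.mem_add.mp h with h | h
          · exact h
          · obtain ⟨b, _, hb⟩ := Multiset.mem_map.mp h
            exact absurd hb (by simp)
        · obtain ⟨b, _, hb⟩ := Multiset.mem_map.mp h
          exact absurd hb (by simp)
      obtain ⟨Sg', rfl⟩ := Multiset.exists_cons_of_mem hmem
      have hX : X = Sg' + Γb.map Fml.box + P.map Fml.mbox := by
        have : Fml.imp φ ψ ::ₘ (Sg' + Γb.map Fml.box + P.map Fml.mbox) =
            Fml.imp φ ψ ::ₘ X := by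
          rw [← h1, Multiset.cons_add, Multiset.cons_add]
        exact ((Multiset.cons_inj_right _).mp this).symm
      refine (ProvS.glue (.mboxF (ψ ::ₘ Sg') Γb P Δb φb) (by simp [Tag.isCut]) ?_
        (by simp [Tag.sideOk]) ?_).ofEq
        (Sequent.mk_eq (by rw [hX, Multiset.cons_add, Multiset.cons_add]) rfl h3)
      · intro ρ₀ hann
        have hann' : Ann.fml φb = Ann.fml ρ₀ := hann
        cases hann'
        exact Multiset.mem_cons_self _ _
      · intro i hi
        have : i < 2 := hi
        interval_cases i
        · exact childProvS hp hcf ht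
            (show 0 < Tag.arity (.mboxF (Fml.imp φ ψ ::ₘ Sg') Γb P Δb φb) by simp [Tag.arity])
        · exact childProvS hp hcf ht
            (show 1 < Tag.arity (.mboxF (Fml.imp φ ψ ::ₘ Sg') Γb P Δb φb) by simp [Tag.arity])
  | mboxU Sg Γb P Δb φb sb =>
      simp only [Tag.concl, Sequent.mk.injEq] at hteq
      obtain ⟨h1, h2, h3⟩ := hteq
      subst h2
      have hmem : Fml.imp φ ψ ∈ Sg := by
        have : Fml.imp φ ψ ∈ Sg + Γb.map Fml.box + P.map Fml.mbox := by
          rw [h1]; exact Multiset.mem_cons_self _ _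
        rcases Multiset.mem_add.mp this with h | h
        · rcases Multiset.mem_add.mp h with h | h
          · exact h
          · obtain ⟨b, _, hb⟩ := Multiset.mem_map.mp h
            exact absurd hb (by simp)
        · obtain ⟨b, _, hb⟩ := Multiset.mem_map.mp h
          exact absurd hb (by simp)
      obtain ⟨Sg', rfl⟩ := Multiset.exists_cons_of_mem hmem
      have hX : X = Sg' + Γb.map Fml.box + P.map Fml.mbox := by
        have : Fml.imp φ ψ ::ₘ (Sg' + Γb.map Fml.box + P.map Fml.mbox) =
            Fml.imp φ ψ ::ₘ X := by
          rw [← h1, Multiset.cons_add, Multiset.cons_add]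
        exact ((Multiset.cons_inj_right _).mp this).symm
      refine (ProvS.glue (.mboxU (ψ ::ₘ Sg') Γb P Δb φb sb) (by simp [Tag.isCut]) ?_
        (by simpa [Tag.sideOk] using hside) ?_).ofEq
        (Sequent.mk_eq (by rw [hX, Multiset.cons_add, Multiset.cons_add]) rfl h3)
      · intro ρ₀ hann
        have hY : Fml.mbox ρ₀ ∈ Y := hokY ρ₀ hann
        rw [← h3] at hY
        exact hY
      · intro i hi
        have : i < 2 := hi
        interval_cases i
        · exact childProvS hp hcf ht
            (show 0 < Tag.arity (.mboxU (Fml.imp φ ψ ::ₘ Sg') Γb P Δb φb sb) by simp [Tag.arity])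
        · exact childProvS hp hcf ht
            (show 1 < Tag.arity (.mboxU (Fml.imp φ ψ ::ₘ Sg') Γb P Δb φb sb) by simp [Tag.arity])
  | cut Γc Δc χc sc =>
      exact absurd (hcf [] _ ht) (by simp [Tag.isCut])

theorem invL1 {φ ψ : Fml} {X Y : Msf} {s : Ann} (h : Provable (Fml.imp φ ψ ::ₘ X) s Y) :
    Provable (ψ ::ₘ X) s Y := by
  obtain ⟨ρ, hp, hcf, hc⟩ := h
  exact invL1_aux ρ hp hcf φ ψ X s Y hc
/-- Inversion of `→R`. -/
theorem invR_aux : ∀ ρ : PreProof, ρ.IsProof → ρ.CutFree →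
    ∀ φ ψ X s Y, ρ.Concl ⟨X, s, Fml.imp φ ψ ::ₘ Y⟩ → Provable (φ ::ₘ X) s (ψ ::ₘ Y) := by
  apply localInd
  intro ρ hp hcf IH φ ψ X s Y hc
  obtain ⟨t, ht, hteq⟩ := hc
  have hok := hp.1.seqOk [] t ht
  have hside := hp.1.side [] t ht
  rw [hteq] at hok
  have hokY : ∀ ρ₀, s = Ann.fml ρ₀ → Fml.mbox ρ₀ ∈ Y := by
    intro ρ₀ h
    exact mem_of_mem_cons_ne (hok ρ₀ h) (by simp)
  cases t with
  | ax Γa p Δa sa =>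
      simp only [Tag.concl, Sequent.mk.injEq] at hteq
      obtain ⟨h1, h2, h3⟩ := hteq
      subst h2
      rcases Multiset.cons_eq_cons.mp h3 with ⟨he, _⟩ | ⟨_, cs, hcs1, hcs2⟩
      · exact absurd he (by simp)
      refine (ProvS.glue (.ax (φ ::ₘ Γa) p (ψ ::ₘ cs) sa) (by simp [Tag.isCut]) ?_
        (by simp [Tag.sideOk]) (by intro i hi; simp [Tag.arity] at hi)).ofEq
        (Sequent.mk_eq (by rw [← h1]; exact Multiset.cons_swap _ _ _)
          rfl (by rw [hcs2]; exact Multiset.cons_swap _ _ _))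
      intro ρ₀ hann
      have hY : Fml.mbox ρ₀ ∈ Y := hokY ρ₀ hann
      rw [hcs2] at hY
      show Fml.mbox ρ₀ ∈ Fml.var p ::ₘ (ψ ::ₘ cs)
      rcases Multiset.mem_cons.mp hY with h | h
      · exact Multiset.mem_cons.mpr (Or.inl h)
      · exact Multiset.mem_cons.mpr (Or.inr (Multiset.mem_cons.mpr (Or.inr h)))
  | axBot Γa Δa sa =>
      simp only [Tag.concl, Sequent.mk.injEq] at hteq
      obtain ⟨h1, h2, h3⟩ := hteq
      subst h2
      refine (ProvS.glue (.axBot (φ ::ₘ Γa) (ψ ::ₘ Y) sa) (by simp [Tag.isCut]) ?_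
        (by simp [Tag.sideOk]) (by intro i hi; simp [Tag.arity] at hi)).ofEq
        (Sequent.mk_eq (by rw [← h1]; exact Multiset.cons_swap _ _ _) rfl rfl)
      intro ρ₀ hann
      exact Multiset.mem_cons.mpr (Or.inr (hokY ρ₀ hann))
  | impL Γa φ' ψ' Δa sa =>
      simp only [Tag.concl, Sequent.mk.injEq] at hteq
      obtain ⟨h1, h2, h3⟩ := hteq
      subst h2
      have har0 : 0 < Tag.arity (.impL Γa φ' ψ' Δa sa) := by simp [Tag.arity]
      have har1 : 1 < Tag.arity (.impL Γa φ' ψ' Δa sa) := by simp [Tag.arity]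
      have c0 : Provable (φ ::ₘ Γa) sa (ψ ::ₘ (φ' ::ₘ Y)) :=
        IH 0 _ ht rfl rfl har0 φ ψ Γa sa (φ' ::ₘ Y)
          ((childProof hp ht har0).2.2.ofEq
            (Sequent.mk_eq rfl rfl (by rw [h3, Multiset.cons_swap])))
      have c1 : Provable (φ ::ₘ (ψ' ::ₘ Γa)) sa (ψ ::ₘ Y) :=
        IH 1 _ ht rfl rfl har1 φ ψ (ψ' ::ₘ Γa) sa Y
          ((childProof hp ht har1).2.2.ofEq (Sequent.mk_eq rfl rfl h3))
      refine (ProvS.glue (.impL (φ ::ₘ Γa) φ' ψ' (ψ ::ₘ Y) sa) (by simp [Tag.isCut]) ?_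
        (by simp [Tag.sideOk]) ?_).ofEq
        (Sequent.mk_eq (by rw [← h1]; exact Multiset.cons_swap _ _ _) rfl rfl)
      · intro ρ₀ hann
        exact Multiset.mem_cons.mpr (Or.inr (hokY ρ₀ hann))
      · intro i hi
        have : i < 2 := hi
        interval_cases i
        · exact (provS_iff.mpr c0).ofEq (Sequent.mk_eq rfl rfl (Multiset.cons_swap _ _ _))
        · exact (provS_iff.mpr c1).ofEq (Sequent.mk_eq (Multiset.cons_swap _ _ _) rfl rfl)
  | impR Γa φ' ψ' Δa sa =>
      simp only [Tag.concl, Sequent.mk.injEq] at hteq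
      obtain ⟨h1, h2, h3⟩ := hteq
      subst h2
      have har0 : 0 < Tag.arity (.impR Γa φ' ψ' Δa sa) := by simp [Tag.arity]
      rcases Multiset.cons_eq_cons.mp h3 with ⟨he, hrest⟩ | ⟨_, cs, hcs1, hcs2⟩
      · injection he with he1 he2
        subst he1; subst he2
        exact provS_iff.mp ((childProvS hp hcf ht har0).ofEq
          (Sequent.mk_eq (by rw [h1]) rfl (by rw [hrest])))
      · have c0 : Provable (φ ::ₘ (φ' ::ₘ Γa)) sa (ψ ::ₘ (ψ' ::ₘ cs)) :=
          IH 0 _ ht rfl rfl har0 φ ψ (φ' ::ₘ Γa) sa (ψ' ::ₘ cs)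
            ((childProof hp ht har0).2.2.ofEq
              (Sequent.mk_eq rfl rfl (by rw [hcs1, Multiset.cons_swap])))
        refine (ProvS.glue (.impR (φ ::ₘ Γa) φ' ψ' (ψ ::ₘ cs) sa) (by simp [Tag.isCut]) ?_
          (by simp [Tag.sideOk]) ?_).ofEq
          (Sequent.mk_eq (by rw [h1]) rfl (by rw [hcs2]; exact Multiset.cons_swap _ _ _))
        · intro ρ₀ hann
          have hY : Fml.mbox ρ₀ ∈ Y := hokY ρ₀ hann
          rw [hcs2] at hY
          show Fml.mbox ρ₀ ∈ Fml.imp φ' ψ' ::ₘ (ψ ::ₘ cs)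
          rcases Multiset.mem_cons.mp hY with h | h
          · exact Multiset.mem_cons.mpr (Or.inl h)
          · exact Multiset.mem_cons.mpr (Or.inr (Multiset.mem_cons.mpr (Or.inr h)))
        · intro i hi
          have : i < 1 := hi
          interval_cases i
          exact (provS_iff.mpr c0).ofEq
            (Sequent.mk_eq (Multiset.cons_swap _ _ _) rfl (Multiset.cons_swap _ _ _))
  | box Sg Γb P Δb φb sb =>
      simp only [Tag.concl, Sequent.mk.injEq] at hteq
      obtain ⟨h1, h2, h3⟩ := hteq
      subst h2
      rcases Multiset.cons_eq_cons.mp h3 with ⟨he, _⟩ | ⟨_, cs, hcs1, hcs2⟩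
      · exact absurd he (by simp)
      refine (ProvS.glue (.box (φ ::ₘ Sg) Γb P (ψ ::ₘ cs) φb sb) (by simp [Tag.isCut]) ?_
        (by simp [Tag.sideOk]) ?_).ofEq
        (Sequent.mk_eq (by rw [← h1, Multiset.cons_add, Multiset.cons_add])
          rfl (by rw [hcs2]; exact Multiset.cons_swap _ _ _))
      · intro ρ₀ hann
        have hY : Fml.mbox ρ₀ ∈ Y := hokY ρ₀ hann
        rw [hcs2] at hY
        show Fml.mbox ρ₀ ∈ Fml.box φb ::ₘ (ψ ::ₘ cs)
        rcases Multiset.mem_cons.mp hY with h | h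
        · exact Multiset.mem_cons.mpr (Or.inl h)
        · exact Multiset.mem_cons.mpr (Or.inr (Multiset.mem_cons.mpr (Or.inr h)))
      · intro i hi
        have : i < 1 := hi
        interval_cases i
        exact childProvS hp hcf ht
          (show 0 < Tag.arity (.box Sg Γb P Δb φb sb) by simp [Tag.arity])
  | mboxF Sg Γb P Δb φb =>
      simp only [Tag.concl, Sequent.mk.injEq] at hteq
      obtain ⟨h1, h2, h3⟩ := hteq
      subst h2
      rcases Multiset.cons_eq_cons.mp h3 with ⟨he, _⟩ | ⟨_, cs, hcs1, hcs2⟩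
      · exact absurd he (by simp)
      refine (ProvS.glue (.mboxF (φ ::ₘ Sg) Γb P (ψ ::ₘ cs) φb) (by simp [Tag.isCut]) ?_
        (by simp [Tag.sideOk]) ?_).ofEq
        (Sequent.mk_eq (by rw [← h1, Multiset.cons_add, Multiset.cons_add])
          rfl (by rw [hcs2]; exact Multiset.cons_swap _ _ _))
      · intro ρ₀ hann
        have hann' : Ann.fml φb = Ann.fml ρ₀ := hann
        cases hann'
        exact Multiset.mem_cons_self _ _
      · intro i hi
        have : i < 2 := hi
        interval_cases i
        · exact childProvS hp hcf ht
            (show 0 < Tag.arity (.mboxF Sg Γb P Δb φb) by simp [Tag.arity])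
        · exact childProvS hp hcf ht
            (show 1 < Tag.arity (.mboxF Sg Γb P Δb φb) by simp [Tag.arity])
  | mboxU Sg Γb P Δb φb sb =>
      simp only [Tag.concl, Sequent.mk.injEq] at hteq
      obtain ⟨h1, h2, h3⟩ := hteq
      subst h2
      rcases Multiset.cons_eq_cons.mp h3 with ⟨he, _⟩ | ⟨_, cs, hcs1, hcs2⟩
      · exact absurd he (by simp)
      refine (ProvS.glue (.mboxU (φ ::ₘ Sg) Γb P (ψ ::ₘ cs) φb sb) (by simp [Tag.isCut]) ?_
        (by simpa [Tag.sideOk] using hside) ?_).ofEq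
        (Sequent.mk_eq (by rw [← h1, Multiset.cons_add, Multiset.cons_add])
          rfl (by rw [hcs2]; exact Multiset.cons_swap _ _ _))
      · intro ρ₀ hann
        have hY : Fml.mbox ρ₀ ∈ Y := hokY ρ₀ hann
        rw [hcs2] at hY
        show Fml.mbox ρ₀ ∈ Fml.mbox φb ::ₘ (ψ ::ₘ cs)
        rcases Multiset.mem_cons.mp hY with h | h
        · exact Multiset.mem_cons.mpr (Or.inl h)
        · exact Multiset.mem_cons.mpr (Or.inr (Multiset.mem_cons.mpr (Or.inr h)))
      · intro i hi
        have : i < 2 := hi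
        interval_cases i
        · exact childProvS hp hcf ht
            (show 0 < Tag.arity (.mboxU Sg Γb P Δb φb sb) by simp [Tag.arity])
        · exact childProvS hp hcf ht
            (show 1 < Tag.arity (.mboxU Sg Γb P Δb φb sb) by simp [Tag.arity])
  | cut Γc Δc χc sc =>
      exact absurd (hcf [] _ ht) (by simp [Tag.isCut])

theorem invR {φ ψ : Fml} {X Y : Msf} {s : Ann} (h : Provable X s (Fml.imp φ ψ ::ₘ Y)) :
    Provable (φ ::ₘ X) s (ψ ::ₘ Y) := by
  obtain ⟨ρ, hp, hcf, hc⟩ := h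
  exact invR_aux ρ hp hcf φ ψ X s Y hc
/-- Annotation lift: an unfocused proof can be focused on `ρ₀` if `⊞ρ₀` is on the right. -/
theorem liftAnn_aux : ∀ ρ : PreProof, ρ.IsProof → ρ.CutFree →
    ∀ X Y (ρ₀ : Fml), ρ.Concl ⟨X, Ann.o, Y⟩ → Fml.mbox ρ₀ ∈ Y →
      Provable X (Ann.fml ρ₀) Y := by
  apply localInd
  intro ρ hp hcf IH X Y ρ₀ hc hmem
  obtain ⟨t, ht, hteq⟩ := hc
  have hside := hp.1.side [] t ht
  cases t with
  | ax Γa p Δa sa =>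
      simp only [Tag.concl, Sequent.mk.injEq] at hteq
      obtain ⟨h1, h2, h3⟩ := hteq
      subst h2
      refine (ProvS.glue (.ax Γa p Δa (Ann.fml ρ₀)) (by simp [Tag.isCut]) ?_
        (by simp [Tag.sideOk]) (by intro i hi; simp [Tag.arity] at hi)).ofEq
        (Sequent.mk_eq h1 rfl h3)
      intro q hann
      have hq : Ann.fml ρ₀ = Ann.fml q := hann
      injection hq with hq'
      subst hq'
      show Fml.mbox ρ₀ ∈ Fml.var p ::ₘ Δa
      rw [h3]; exact hmem
  | axBot Γa Δa sa =>
      simp only [Tag.concl, Sequent.mk.injEq] at hteq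
      obtain ⟨h1, h2, h3⟩ := hteq
      subst h2
      refine (ProvS.glue (.axBot Γa Δa (Ann.fml ρ₀)) (by simp [Tag.isCut]) ?_
        (by simp [Tag.sideOk]) (by intro i hi; simp [Tag.arity] at hi)).ofEq
        (Sequent.mk_eq h1 rfl h3)
      intro q hann
      have hq : Ann.fml ρ₀ = Ann.fml q := hann
      injection hq with hq'
      subst hq'
      show Fml.mbox ρ₀ ∈ Δa
      rw [h3]; exact hmem
  | impL Γa φ' ψ' Δa sa =>
      simp only [Tag.concl, Sequent.mk.injEq] at hteq
      obtain ⟨h1, h2, h3⟩ := hteq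
      subst h2
      have har0 : 0 < Tag.arity (.impL Γa φ' ψ' Δa Ann.o) := by simp [Tag.arity]
      have har1 : 1 < Tag.arity (.impL Γa φ' ψ' Δa Ann.o) := by simp [Tag.arity]
      have hmem' : Fml.mbox ρ₀ ∈ Δa := by rw [h3]; exact hmem
      have c0 : Provable Γa (Ann.fml ρ₀) (φ' ::ₘ Δa) :=
        IH 0 _ ht rfl rfl har0 Γa (φ' ::ₘ Δa) ρ₀ ((childProof hp ht har0).2.2.ofEq rfl)
          (Multiset.mem_cons.mpr (Or.inr hmem'))
      have c1 : Provable (ψ' ::ₘ Γa) (Ann.fml ρ₀) Δa :=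
        IH 1 _ ht rfl rfl har1 (ψ' ::ₘ Γa) Δa ρ₀ ((childProof hp ht har1).2.2.ofEq rfl) hmem'
      refine (ProvS.glue (.impL Γa φ' ψ' Δa (Ann.fml ρ₀)) (by simp [Tag.isCut]) ?_
        (by simp [Tag.sideOk]) ?_).ofEq (Sequent.mk_eq h1 rfl h3)
      · intro q hann
        have hq : Ann.fml ρ₀ = Ann.fml q := hann
        injection hq with hq'
        subst hq'
        exact hmem'
      · intro i hi
        have : i < 2 := hi
        interval_cases i
        · exact provS_iff.mpr c0
        · exact provS_iff.mpr c1
  | impR Γa φ' ψ' Δa sa =>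
      simp only [Tag.concl, Sequent.mk.injEq] at hteq
      obtain ⟨h1, h2, h3⟩ := hteq
      subst h2
      have har0 : 0 < Tag.arity (.impR Γa φ' ψ' Δa Ann.o) := by simp [Tag.arity]
      have hmem' : Fml.mbox ρ₀ ∈ Δa := by
        have : Fml.mbox ρ₀ ∈ Fml.imp φ' ψ' ::ₘ Δa := by rw [h3]; exact hmem
        exact mem_of_mem_cons_ne this (by simp)
      have c0 : Provable (φ' ::ₘ Γa) (Ann.fml ρ₀) (ψ' ::ₘ Δa) :=
        IH 0 _ ht rfl rfl har0 (φ' ::ₘ Γa) (ψ' ::ₘ Δa) ρ₀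
          ((childProof hp ht har0).2.2.ofEq rfl) (Multiset.mem_cons.mpr (Or.inr hmem'))
      refine (ProvS.glue (.impR Γa φ' ψ' Δa (Ann.fml ρ₀)) (by simp [Tag.isCut]) ?_
        (by simp [Tag.sideOk]) ?_).ofEq (Sequent.mk_eq h1 rfl h3)
      · intro q hann
        have hq : Ann.fml ρ₀ = Ann.fml q := hann
        injection hq with hq'
        subst hq'
        show Fml.mbox ρ₀ ∈ Fml.imp φ' ψ' ::ₘ Δa
        rw [h3]; exact hmem
      · intro i hi
        have : i < 1 := hi
        interval_cases i
        exact provS_iff.mpr c0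
  | box Sg Γb P Δb φb sb =>
      simp only [Tag.concl, Sequent.mk.injEq] at hteq
      obtain ⟨h1, h2, h3⟩ := hteq
      subst h2
      refine (ProvS.glue (.box Sg Γb P Δb φb (Ann.fml ρ₀)) (by simp [Tag.isCut]) ?_
        (by simp [Tag.sideOk]) ?_).ofEq (Sequent.mk_eq h1 rfl h3)
      · intro q hann
        have hq : Ann.fml ρ₀ = Ann.fml q := hann
        injection hq with hq'
        subst hq'
        show Fml.mbox ρ₀ ∈ Fml.box φb ::ₘ Δb
        rw [h3]; exact hmem
      · intro i hi
        have : i < 1 := hi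
        interval_cases i
        exact childProvS hp hcf ht
          (show 0 < Tag.arity (.box Sg Γb P Δb φb Ann.o) by simp [Tag.arity])
  | mboxF Sg Γb P Δb φb =>
      simp only [Tag.concl, Sequent.mk.injEq] at hteq
      obtain ⟨h1, h2, h3⟩ := hteq
      exact absurd h2 (by simp)
  | mboxU Sg Γb P Δb φb sb =>
      simp only [Tag.concl, Sequent.mk.injEq] at hteq
      obtain ⟨h1, h2, h3⟩ := hteq
      subst h2
      by_cases hρφ : ρ₀ = φb
      · subst hρφ
        refine (ProvS.glue (.mboxF Sg Γb P Δb ρ₀) (by simp [Tag.isCut]) ?_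
          (by simp [Tag.sideOk]) ?_).ofEq (Sequent.mk_eq h1 rfl h3)
        · intro q hann
          have hq : Ann.fml ρ₀ = Ann.fml q := hann
          injection hq with hq'
          subst hq'
          exact Multiset.mem_cons_self _ _
        · intro i hi
          have : i < 2 := hi
          interval_cases i
          · exact childProvS hp hcf ht
              (show 0 < Tag.arity (.mboxU Sg Γb P Δb ρ₀ Ann.o) by simp [Tag.arity])
          · exact childProvS hp hcf ht
              (show 1 < Tag.arity (.mboxU Sg Γb P Δb ρ₀ Ann.o) by simp [Tag.arity])
      · refine (ProvS.glue (.mboxU Sg Γb P Δb φb (Ann.fml ρ₀)) (by simp [Tag.isCut]) ?_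
          ?_ ?_).ofEq (Sequent.mk_eq h1 rfl h3)
        · intro q hann
          have hq : Ann.fml ρ₀ = Ann.fml q := hann
          injection hq with hq'
          subst hq'
          show Fml.mbox ρ₀ ∈ Fml.mbox φb ::ₘ Δb
          rw [h3]; exact hmem
        · show Ann.fml ρ₀ ≠ Ann.fml φb
          intro h
          injection h with h'
          exact hρφ h'
        · intro i hi
          have : i < 2 := hi
          interval_cases i
          · exact childProvS hp hcf ht
              (show 0 < Tag.arity (.mboxU Sg Γb P Δb φb Ann.o) by simp [Tag.arity])
          · exact childProvS hp hcf ht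
              (show 1 < Tag.arity (.mboxU Sg Γb P Δb φb Ann.o) by simp [Tag.arity])
  | cut Γc Δc χc sc =>
      exact absurd (hcf [] _ ht) (by simp [Tag.isCut])

theorem liftAnn {X Y : Msf} {ρ₀ : Fml} (h : Provable X Ann.o Y) (hmem : Fml.mbox ρ₀ ∈ Y) :
    Provable X (Ann.fml ρ₀) Y := by
  obtain ⟨ρ, hp, hcf, hc⟩ := h
  exact liftAnn_aux ρ hp hcf X Y ρ₀ hc hmem
deriving instance DecidableEq for Fml

theorem boxInj : Function.Injective Fml.box := fun a b h => by injection h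

theorem mboxInj : Function.Injective Fml.mbox := fun a b h => by injection h

theorem add_cons' (s t : Msf) (a : Fml) : s + (a ::ₘ t) = a ::ₘ (s + t) := by
  rw [add_comm, Multiset.cons_add, add_comm]

theorem le_of_le_cons {m t : Msf} {a : Fml} (h : m ≤ a ::ₘ t) (ha : a ∉ m) : m ≤ t := by
  rw [Multiset.le_iff_count] at h ⊢
  intro x
  have hx := h x
  rw [Multiset.count_cons] at hx
  by_cases hxa : x = a
  · subst hxa
    rw [Multiset.count_eq_zero.mpr ha]
    exact Nat.zero_le _
  · simpa [hxa] using hx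

theorem count_map_box_zero {m : Msf} {x : Fml} (h : ∀ y, x ≠ Fml.box y) :
    Multiset.count x (m.map Fml.box) = 0 := by
  rw [Multiset.count_eq_zero]
  intro hx
  obtain ⟨y, _, hy⟩ := Multiset.mem_map.mp hx
  exact h y hy.symm

theorem count_map_mbox_zero {m : Msf} {x : Fml} (h : ∀ y, x ≠ Fml.mbox y) :
    Multiset.count x (m.map Fml.mbox) = 0 := by
  rw [Multiset.count_eq_zero]
  intro hx
  obtain ⟨y, _, hy⟩ := Multiset.mem_map.mp hx
  exact h y hy.symm

theorem maxdecomp {Γ1 Pw1 Γ2 Pw2 Λ : Msf}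
    (h1 : Γ1.map Fml.box + Pw1.map Fml.mbox ≤ Λ)
    (h2 : Γ2.map Fml.box + Pw2.map Fml.mbox ≤ Λ) :
    (Γ1 ∪ Γ2).map Fml.box + (Pw1 ∪ Pw2).map Fml.mbox ≤ Λ := by
  rw [Multiset.le_iff_count] at h1 h2 ⊢
  intro x
  have e1 := h1 x
  have e2 := h2 x
  rw [Multiset.count_add] at e1 e2
  rw [Multiset.count_add, Multiset.map_union boxInj, Multiset.map_union mboxInj,
    Multiset.count_union, Multiset.count_union]
  have key : (Multiset.count x (Pw1.map Fml.mbox) = 0 ∧ Multiset.count x (Pw2.map Fml.mbox) = 0) ∨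
      (Multiset.count x (Γ1.map Fml.box) = 0 ∧ Multiset.count x (Γ2.map Fml.box) = 0) := by
    cases x with
    | box y =>
        exact Or.inl ⟨count_map_mbox_zero (by simp), count_map_mbox_zero (by simp)⟩
    | var n =>
        exact Or.inr ⟨count_map_box_zero (by simp), count_map_box_zero (by simp)⟩
    | bot =>
        exact Or.inr ⟨count_map_box_zero (by simp), count_map_box_zero (by simp)⟩
    | imp a b =>
        exact Or.inr ⟨count_map_box_zero (by simp), count_map_box_zero (by simp)⟩
    | mbox y =>
        exact Or.inr ⟨count_map_box_zero (by simp), count_map_box_zero (by simp)⟩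
  rcases key with ⟨k1, k2⟩ | ⟨k1, k2⟩ <;> rw [k1, k2] <;> simp <;> omega

theorem notmem_decomp_imp (Γ' Pw : Msf) (φ ψ : Fml) :
    Fml.imp φ ψ ∉ Γ'.map Fml.box + Pw.map Fml.mbox := by
  intro h
  rcases Multiset.mem_add.mp h with h | h <;>
    · obtain ⟨y, _, hy⟩ := Multiset.mem_map.mp h
      exact absurd hy (by simp)

/-- The key lemma: pushing a cut on `□χ` into the right premise. -/
theorem lemF_aux (χ : Fml) (hχ : CutAdm χ) : ∀ ρ : PreProof, ρ.IsProof → ρ.CutFree →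
    ∀ s Λ Θ, ρ.Concl ⟨Fml.box χ ::ₘ Λ, s, Θ⟩ →
    ∀ Γ' Pw, Γ'.map Fml.box + Pw.map Fml.mbox ≤ Λ → Provable (Γ' + dne Pw) Ann.o {χ} →
    Provable Λ s Θ := by
  apply localInd
  intro ρ hp hcf IH s Λ Θ hc Γ' Pw hle hw
  obtain ⟨t, ht, hteq⟩ := hc
  have hok := hp.1.seqOk [] t ht
  have hside := hp.1.side [] t ht
  rw [hteq] at hok
  have hokY : ∀ ρ₀, s = Ann.fml ρ₀ → Fml.mbox ρ₀ ∈ Θ := fun ρ₀ h => hok ρ₀ h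
  cases t with
  | ax Γa p Δa sa =>
      simp only [Tag.concl, Sequent.mk.injEq] at hteq
      obtain ⟨h1, h2, h3⟩ := hteq
      subst h2
      rcases Multiset.cons_eq_cons.mp h1 with ⟨he, _⟩ | ⟨_, cs, hcs1, hcs2⟩
      · exact absurd he (by simp)
      refine (ProvS.glue (.ax cs p Δa sa) (by simp [Tag.isCut]) ?_
        (by simp [Tag.sideOk]) (by intro i hi; simp [Tag.arity] at hi)).ofEq
        (Sequent.mk_eq hcs2.symm rfl h3)
      intro ρ₀ hann
      show Fml.mbox ρ₀ ∈ Fml.var p ::ₘ Δa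
      rw [h3]
      exact hokY ρ₀ hann
  | axBot Γa Δa sa =>
      simp only [Tag.concl, Sequent.mk.injEq] at hteq
      obtain ⟨h1, h2, h3⟩ := hteq
      subst h2
      rcases Multiset.cons_eq_cons.mp h1 with ⟨he, _⟩ | ⟨_, cs, hcs1, hcs2⟩
      · exact absurd he (by simp)
      refine (ProvS.glue (.axBot cs Θ sa) (by simp [Tag.isCut]) ?_
        (by simp [Tag.sideOk]) (by intro i hi; simp [Tag.arity] at hi)).ofEq
        (Sequent.mk_eq hcs2.symm rfl rfl)
      intro ρ₀ hann
      exact hokY ρ₀ hann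
  | impL Γa φ' ψ' Δa sa =>
      simp only [Tag.concl, Sequent.mk.injEq] at hteq
      obtain ⟨h1, h2, h3⟩ := hteq
      subst h2
      have har0 : 0 < Tag.arity (.impL Γa φ' ψ' Δa sa) := by simp [Tag.arity]
      have har1 : 1 < Tag.arity (.impL Γa φ' ψ' Δa sa) := by simp [Tag.arity]
      rcases Multiset.cons_eq_cons.mp h1 with ⟨he, _⟩ | ⟨_, cs, hcs1, hcs2⟩
      · exact absurd he (by simp)
      have hlecs : Γ'.map Fml.box + Pw.map Fml.mbox ≤ cs := by
        apply le_of_le_cons (a := Fml.imp φ' ψ')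
        · rwa [← hcs2]
        · exact notmem_decomp_imp Γ' Pw φ' ψ'
      have c0 : Provable cs sa (φ' ::ₘ Δa) :=
        IH 0 _ ht rfl rfl har0 sa cs (φ' ::ₘ Δa)
          ((childProof hp ht har0).2.2.ofEq (Sequent.mk_eq hcs1 rfl rfl)) Γ' Pw hlecs hw
      have c1 : Provable (ψ' ::ₘ cs) sa Δa :=
        IH 1 _ ht rfl rfl har1 sa (ψ' ::ₘ cs) Δa
          ((childProof hp ht har1).2.2.ofEq
            (Sequent.mk_eq (by rw [hcs1, Multiset.cons_swap]) rfl rfl)) Γ' Pw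
          (le_trans hlecs (Multiset.le_cons_self _ _)) hw
      refine (ProvS.glue (.impL cs φ' ψ' Δa sa) (by simp [Tag.isCut]) ?_
        (by simp [Tag.sideOk]) ?_).ofEq (Sequent.mk_eq hcs2.symm rfl h3)
      · intro ρ₀ hann
        show Fml.mbox ρ₀ ∈ Δa
        have := hokY ρ₀ hann
        rwa [← h3] at this
      · intro i hi
        have : i < 2 := hi
        interval_cases i
        · exact provS_iff.mpr c0
        · exact provS_iff.mpr c1
  | impR Γa φ' ψ' Δa sa =>
      simp only [Tag.concl, Sequent.mk.injEq] at hteq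
      obtain ⟨h1, h2, h3⟩ := hteq
      subst h2
      have har0 : 0 < Tag.arity (.impR Γa φ' ψ' Δa sa) := by simp [Tag.arity]
      have c0 : Provable (φ' ::ₘ Λ) sa (ψ' ::ₘ Δa) :=
        IH 0 _ ht rfl rfl har0 sa (φ' ::ₘ Λ) (ψ' ::ₘ Δa)
          ((childProof hp ht har0).2.2.ofEq
            (Sequent.mk_eq (by rw [h1, Multiset.cons_swap]) rfl rfl)) Γ' Pw
          (le_trans hle (Multiset.le_cons_self _ _)) hw
      refine (ProvS.glue (.impR Λ φ' ψ' Δa sa) (by simp [Tag.isCut]) ?_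
        (by simp [Tag.sideOk]) ?_).ofEq (Sequent.mk_eq rfl rfl h3)
      · intro ρ₀ hann
        show Fml.mbox ρ₀ ∈ Fml.imp φ' ψ' ::ₘ Δa
        rw [h3]
        exact hokY ρ₀ hann
      · intro i hi
        have : i < 1 := hi
        interval_cases i
        exact provS_iff.mpr c0
  | box Sg Γb P Δb φb sb =>
      simp only [Tag.concl, Sequent.mk.injEq] at hteq
      obtain ⟨h1, h2, h3⟩ := hteq
      subst h2
      have hmem : Fml.box χ ∈ Sg + Γb.map Fml.box + P.map Fml.mbox := by
        rw [h1]; exact Multiset.mem_cons_self _ _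
      rcases Multiset.mem_add.mp hmem with hm | hm
      · rcases Multiset.mem_add.mp hm with hm | hm
        · -- box χ ∈ Sg : just drop it
          obtain ⟨Sg', rfl⟩ := Multiset.exists_cons_of_mem hm
          have hΛ : Λ = Sg' + Γb.map Fml.box + P.map Fml.mbox := by
            have : Fml.box χ ::ₘ (Sg' + Γb.map Fml.box + P.map Fml.mbox) =
                Fml.box χ ::ₘ Λ := by
              rw [← h1, Multiset.cons_add, Multiset.cons_add]
            exact ((Multiset.cons_inj_right _).mp this).symm
          refine (ProvS.glue (.box Sg' Γb P Δb φb sb) (by simp [Tag.isCut]) ?_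
            (by simp [Tag.sideOk]) ?_).ofEq (Sequent.mk_eq hΛ.symm rfl h3)
          · intro ρ₀ hann
            show Fml.mbox ρ₀ ∈ Fml.box φb ::ₘ Δb
            rw [h3]
            exact hokY ρ₀ hann
          · intro i hi
            have : i < 1 := hi
            interval_cases i
            exact childProvS hp hcf ht
              (show 0 < Tag.arity (.box (Fml.box χ ::ₘ Sg') Γb P Δb φb sb) by simp [Tag.arity])
        · -- box χ ∈ map box Γb : the principal case
          obtain ⟨y, hy, hyx⟩ := Multiset.mem_map.mp hm
          rw [boxInj hyx] at hy
          obtain ⟨Γbe, rfl⟩ := Multiset.exists_cons_of_mem hy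
          have hΛ : Λ = Sg + Γbe.map Fml.box + P.map Fml.mbox := by
            have : Fml.box χ ::ₘ (Sg + Γbe.map Fml.box + P.map Fml.mbox) =
                Fml.box χ ::ₘ Λ := by
              rw [← h1, Multiset.map_cons, add_cons', Multiset.cons_add]
            exact ((Multiset.cons_inj_right _).mp this).symm
          set Γn : Msf := Γ' ∪ Γbe with hΓn
          set Pwn : Msf := Pw ∪ P with hPwn
          have hlen : Γn.map Fml.box + Pwn.map Fml.mbox ≤ Λ := by
            apply maxdecomp hle
            rw [hΛ, add_assoc]
            exact self_le_add_left _ _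
          have hΛeq : (Λ - (Γn.map Fml.box + Pwn.map Fml.mbox)) + Γn.map Fml.box +
              Pwn.map Fml.mbox = Λ := by
            rw [add_assoc]
            exact tsub_add_cancel_of_le hlen
          have hwle : Γ' + dne Pw ≤ Γn + dne Pwn := by
            apply add_le_add (Multiset.le_union_left)
            exact add_le_add (Multiset.le_union_left)
              (Multiset.map_le_map (Multiset.le_union_left))
          have hvle : Γbe + dne P ≤ Γn + dne Pwn := by
            apply add_le_add (Multiset.le_union_right)
            exact add_le_add (Multiset.le_union_right)
              (Multiset.map_le_map (Multiset.le_union_right))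
          have v : Provable (χ ::ₘ (Γbe + dne P)) Ann.o {φb} :=
            provS_iff.mp ((childProvS hp hcf ht
              (show 0 < Tag.arity (.box Sg (χ ::ₘ Γbe) P Δb φb sb) by simp [Tag.arity])).ofEq
              (Sequent.mk_eq (Multiset.cons_add _ _ _) rfl rfl))
          have W : Provable (Γn + dne Pwn) Ann.o {φb} := by
            apply hχ Ann.o (Γn + dne Pwn) {φb}
            · exact weak hw hwle (Multiset.cons_le_cons _ (Multiset.zero_le _))
            · exact weak v (Multiset.cons_le_cons _ hvle) le_rfl
          refine (ProvS.glue (.box (Λ - (Γn.map Fml.box + Pwn.map Fml.mbox)) Γn Pwn Δb φb sb)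
            (by simp [Tag.isCut]) ?_ (by simp [Tag.sideOk]) ?_).ofEq
            (Sequent.mk_eq hΛeq rfl h3)
          · intro ρ₀ hann
            show Fml.mbox ρ₀ ∈ Fml.box φb ::ₘ Δb
            rw [h3]
            exact hokY ρ₀ hann
          · intro i hi
            have : i < 1 := hi
            interval_cases i
            exact provS_iff.mpr W
      · obtain ⟨y, _, hy⟩ := Multiset.mem_map.mp hm
        exact absurd hy (by simp)
  | mboxF Sg Γb P Δb φb =>
      simp only [Tag.concl, Sequent.mk.injEq] at hteq
      obtain ⟨h1, h2, h3⟩ := hteq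
      subst h2
      have hmem : Fml.box χ ∈ Sg + Γb.map Fml.box + P.map Fml.mbox := by
        rw [h1]; exact Multiset.mem_cons_self _ _
      rcases Multiset.mem_add.mp hmem with hm | hm
      · rcases Multiset.mem_add.mp hm with hm | hm
        · obtain ⟨Sg', rfl⟩ := Multiset.exists_cons_of_mem hm
          have hΛ : Λ = Sg' + Γb.map Fml.box + P.map Fml.mbox := by
            have : Fml.box χ ::ₘ (Sg' + Γb.map Fml.box + P.map Fml.mbox) =
                Fml.box χ ::ₘ Λ := by
              rw [← h1, Multiset.cons_add, Multiset.cons_add]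
            exact ((Multiset.cons_inj_right _).mp this).symm
          refine (ProvS.glue (.mboxF Sg' Γb P Δb φb) (by simp [Tag.isCut]) ?_
            (by simp [Tag.sideOk]) ?_).ofEq (Sequent.mk_eq hΛ.symm rfl h3)
          · intro ρ₀ hann
            have hann' : Ann.fml φb = Ann.fml ρ₀ := hann
            cases hann'
            exact Multiset.mem_cons_self _ _
          · intro i hi
            have : i < 2 := hi
            interval_cases i
            · exact childProvS hp hcf ht
                (show 0 < Tag.arity (.mboxF (Fml.box χ ::ₘ Sg') Γb P Δb φb) by simp [Tag.arity])
            · exact childProvS hp hcf ht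
                (show 1 < Tag.arity (.mboxF (Fml.box χ ::ₘ Sg') Γb P Δb φb) by simp [Tag.arity])
        · obtain ⟨y, hy, hyx⟩ := Multiset.mem_map.mp hm
          rw [boxInj hyx] at hy
          obtain ⟨Γbe, rfl⟩ := Multiset.exists_cons_of_mem hy
          have hΛ : Λ = Sg + Γbe.map Fml.box + P.map Fml.mbox := by
            have : Fml.box χ ::ₘ (Sg + Γbe.map Fml.box + P.map Fml.mbox) =
                Fml.box χ ::ₘ Λ := by
              rw [← h1, Multiset.map_cons, add_cons', Multiset.cons_add]
            exact ((Multiset.cons_inj_right _).mp this).symm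
          set Γn : Msf := Γ' ∪ Γbe with hΓn
          set Pwn : Msf := Pw ∪ P with hPwn
          have hlen : Γn.map Fml.box + Pwn.map Fml.mbox ≤ Λ := by
            apply maxdecomp hle
            rw [hΛ, add_assoc]
            exact self_le_add_left _ _
          have hΛeq : (Λ - (Γn.map Fml.box + Pwn.map Fml.mbox)) + Γn.map Fml.box +
              Pwn.map Fml.mbox = Λ := by
            rw [add_assoc]
            exact tsub_add_cancel_of_le hlen
          have hwle : Γ' + dne Pw ≤ Γn + dne Pwn := by
            apply add_le_add (Multiset.le_union_left)
            exact add_le_add (Multiset.le_union_left)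
              (Multiset.map_le_map (Multiset.le_union_left))
          have hvle : Γbe + dne P ≤ Γn + dne Pwn := by
            apply add_le_add (Multiset.le_union_right)
            exact add_le_add (Multiset.le_union_right)
              (Multiset.map_le_map (Multiset.le_union_right))
          have v0 : Provable (χ ::ₘ (Γbe + dne P)) Ann.o {φb} :=
            provS_iff.mp ((childProvS hp hcf ht
              (show 0 < Tag.arity (.mboxF Sg (χ ::ₘ Γbe) P Δb φb) by simp [Tag.arity])).ofEq
              (Sequent.mk_eq (Multiset.cons_add _ _ _) rfl rfl))
          have v1 : Provable (χ ::ₘ (Γbe + dne P)) (Ann.fml φb) {Fml.mbox φb} :=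
            provS_iff.mp ((childProvS hp hcf ht
              (show 1 < Tag.arity (.mboxF Sg (χ ::ₘ Γbe) P Δb φb) by simp [Tag.arity])).ofEq
              (Sequent.mk_eq (Multiset.cons_add _ _ _) rfl rfl))
          have W0 : Provable (Γn + dne Pwn) Ann.o {φb} := by
            apply hχ Ann.o (Γn + dne Pwn) {φb}
            · exact weak hw hwle (Multiset.cons_le_cons _ (Multiset.zero_le _))
            · exact weak v0 (Multiset.cons_le_cons _ hvle) le_rfl
          have W1 : Provable (Γn + dne Pwn) (Ann.fml φb) {Fml.mbox φb} := by
            apply hχ (Ann.fml φb) (Γn + dne Pwn) {Fml.mbox φb}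
            · apply liftAnn
              · exact weak hw hwle (Multiset.cons_le_cons _ (Multiset.zero_le _))
              · exact Multiset.mem_cons.mpr (Or.inr (Multiset.mem_singleton_self _))
            · exact weak v1 (Multiset.cons_le_cons _ hvle) le_rfl
          refine (ProvS.glue (.mboxF (Λ - (Γn.map Fml.box + Pwn.map Fml.mbox)) Γn Pwn Δb φb)
            (by simp [Tag.isCut]) ?_ (by simp [Tag.sideOk]) ?_).ofEq
            (Sequent.mk_eq hΛeq rfl h3)
          · intro ρ₀ hann
            have hann' : Ann.fml φb = Ann.fml ρ₀ := hann
            cases hann'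
            exact Multiset.mem_cons_self _ _
          · intro i hi
            have : i < 2 := hi
            interval_cases i
            · exact provS_iff.mpr W0
            · exact provS_iff.mpr W1
      · obtain ⟨y, _, hy⟩ := Multiset.mem_map.mp hm
        exact absurd hy (by simp)
  | mboxU Sg Γb P Δb φb sb =>
      simp only [Tag.concl, Sequent.mk.injEq] at hteq
      obtain ⟨h1, h2, h3⟩ := hteq
      subst h2
      have hmem : Fml.box χ ∈ Sg + Γb.map Fml.box + P.map Fml.mbox := by
        rw [h1]; exact Multiset.mem_cons_self _ _
      rcases Multiset.mem_add.mp hmem with hm | hm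
      · rcases Multiset.mem_add.mp hm with hm | hm
        · obtain ⟨Sg', rfl⟩ := Multiset.exists_cons_of_mem hm
          have hΛ : Λ = Sg' + Γb.map Fml.box + P.map Fml.mbox := by
            have : Fml.box χ ::ₘ (Sg' + Γb.map Fml.box + P.map Fml.mbox) =
                Fml.box χ ::ₘ Λ := by
              rw [← h1, Multiset.cons_add, Multiset.cons_add]
            exact ((Multiset.cons_inj_right _).mp this).symm
          refine (ProvS.glue (.mboxU Sg' Γb P Δb φb sb) (by simp [Tag.isCut]) ?_
            (by simpa [Tag.sideOk] using hside) ?_).ofEq (Sequent.mk_eq hΛ.symm rfl h3)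
          · intro ρ₀ hann
            show Fml.mbox ρ₀ ∈ Fml.mbox φb ::ₘ Δb
            rw [h3]
            exact hokY ρ₀ hann
          · intro i hi
            have : i < 2 := hi
            interval_cases i
            · exact childProvS hp hcf ht
                (show 0 < Tag.arity (.mboxU (Fml.box χ ::ₘ Sg') Γb P Δb φb sb) by
                  simp [Tag.arity])
            · exact childProvS hp hcf ht
                (show 1 < Tag.arity (.mboxU (Fml.box χ ::ₘ Sg') Γb P Δb φb sb) by
                  simp [Tag.arity])
        · obtain ⟨y, hy, hyx⟩ := Multiset.mem_map.mp hm
          rw [boxInj hyx] at hy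
          obtain ⟨Γbe, rfl⟩ := Multiset.exists_cons_of_mem hy
          have hΛ : Λ = Sg + Γbe.map Fml.box + P.map Fml.mbox := by
            have : Fml.box χ ::ₘ (Sg + Γbe.map Fml.box + P.map Fml.mbox) =
                Fml.box χ ::ₘ Λ := by
              rw [← h1, Multiset.map_cons, add_cons', Multiset.cons_add]
            exact ((Multiset.cons_inj_right _).mp this).symm
          set Γn : Msf := Γ' ∪ Γbe with hΓn
          set Pwn : Msf := Pw ∪ P with hPwn
          have hlen : Γn.map Fml.box + Pwn.map Fml.mbox ≤ Λ := by
            apply maxdecomp hle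
            rw [hΛ, add_assoc]
            exact self_le_add_left _ _
          have hΛeq : (Λ - (Γn.map Fml.box + Pwn.map Fml.mbox)) + Γn.map Fml.box +
              Pwn.map Fml.mbox = Λ := by
            rw [add_assoc]
            exact tsub_add_cancel_of_le hlen
          have hwle : Γ' + dne Pw ≤ Γn + dne Pwn := by
            apply add_le_add (Multiset.le_union_left)
            exact add_le_add (Multiset.le_union_left)
              (Multiset.map_le_map (Multiset.le_union_left))
          have hvle : Γbe + dne P ≤ Γn + dne Pwn := by
            apply add_le_add (Multiset.le_union_right)
            exact add_le_add (Multiset.le_union_right)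
              (Multiset.map_le_map (Multiset.le_union_right))
          have v0 : Provable (χ ::ₘ (Γbe + dne P)) Ann.o {φb} :=
            provS_iff.mp ((childProvS hp hcf ht
              (show 0 < Tag.arity (.mboxU Sg (χ ::ₘ Γbe) P Δb φb sb) by simp [Tag.arity])).ofEq
              (Sequent.mk_eq (Multiset.cons_add _ _ _) rfl rfl))
          have v1 : Provable (χ ::ₘ (Γbe + dne P)) (Ann.fml φb) {Fml.mbox φb} :=
            provS_iff.mp ((childProvS hp hcf ht
              (show 1 < Tag.arity (.mboxU Sg (χ ::ₘ Γbe) P Δb φb sb) by simp [Tag.arity])).ofEq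
              (Sequent.mk_eq (Multiset.cons_add _ _ _) rfl rfl))
          have W0 : Provable (Γn + dne Pwn) Ann.o {φb} := by
            apply hχ Ann.o (Γn + dne Pwn) {φb}
            · exact weak hw hwle (Multiset.cons_le_cons _ (Multiset.zero_le _))
            · exact weak v0 (Multiset.cons_le_cons _ hvle) le_rfl
          have W1 : Provable (Γn + dne Pwn) (Ann.fml φb) {Fml.mbox φb} := by
            apply hχ (Ann.fml φb) (Γn + dne Pwn) {Fml.mbox φb}
            · apply liftAnn
              · exact weak hw hwle (Multiset.cons_le_cons _ (Multiset.zero_le _))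
              · exact Multiset.mem_cons.mpr (Or.inr (Multiset.mem_singleton_self _))
            · exact weak v1 (Multiset.cons_le_cons _ hvle) le_rfl
          refine (ProvS.glue (.mboxU (Λ - (Γn.map Fml.box + Pwn.map Fml.mbox)) Γn Pwn Δb φb sb)
            (by simp [Tag.isCut]) ?_ (by simpa [Tag.sideOk] using hside) ?_).ofEq
            (Sequent.mk_eq hΛeq rfl h3)
          · intro ρ₀ hann
            show Fml.mbox ρ₀ ∈ Fml.mbox φb ::ₘ Δb
            rw [h3]
            exact hokY ρ₀ hann
          · intro i hi
            have : i < 2 := hi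
            interval_cases i
            · exact provS_iff.mpr W0
            · exact provS_iff.mpr W1
      · obtain ⟨y, _, hy⟩ := Multiset.mem_map.mp hm
        exact absurd hy (by simp)
  | cut Γc Δc χc sc =>
      exact absurd (hcf [] _ ht) (by simp [Tag.isCut])
/-- Main lemma: cut admissibility for `□χ`. -/
theorem lemG_aux (χ : Fml) (hχ : CutAdm χ) : ∀ ρ : PreProof, ρ.IsProof → ρ.CutFree →
    ∀ s Γ Δ, ρ.Concl ⟨Γ, s, Fml.box χ ::ₘ Δ⟩ → Provable (Fml.box χ ::ₘ Γ) s Δ →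
    Provable Γ s Δ := by
  apply localInd
  intro ρ hp hcf IH s Γ Δ hc hτ
  have hokD : ∀ ρ₀, s = Ann.fml ρ₀ → Fml.mbox ρ₀ ∈ Δ := by
    intro ρ₀ h
    obtain ⟨τ, hτp, hτcf, τt, hτt, hτteq⟩ := hτ
    have := hτp.1.seqOk [] τt hτt
    rw [hτteq] at this
    exact this ρ₀ h
  obtain ⟨t, ht, hteq⟩ := hc
  have hside := hp.1.side [] t ht
  cases t with
  | ax Γa p Δa sa =>
      simp only [Tag.concl, Sequent.mk.injEq] at hteq
      obtain ⟨h1, h2, h3⟩ := hteq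
      subst h2
      rcases Multiset.cons_eq_cons.mp h3 with ⟨he, _⟩ | ⟨_, cs, hcs1, hcs2⟩
      · exact absurd he (by simp)
      refine (ProvS.glue (.ax Γa p cs sa) (by simp [Tag.isCut]) ?_
        (by simp [Tag.sideOk]) (by intro i hi; simp [Tag.arity] at hi)).ofEq
        (Sequent.mk_eq h1 rfl hcs2.symm)
      intro ρ₀ hann
      show Fml.mbox ρ₀ ∈ Fml.var p ::ₘ cs
      rw [← hcs2]
      exact hokD ρ₀ hann
  | axBot Γa Δa sa =>
      simp only [Tag.concl, Sequent.mk.injEq] at hteq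
      obtain ⟨h1, h2, h3⟩ := hteq
      subst h2
      refine (ProvS.glue (.axBot Γa Δ sa) (by simp [Tag.isCut]) ?_
        (by simp [Tag.sideOk]) (by intro i hi; simp [Tag.arity] at hi)).ofEq
        (Sequent.mk_eq h1 rfl rfl)
      intro ρ₀ hann
      exact hokD ρ₀ hann
  | impL Γa φ' ψ' Δa sa =>
      simp only [Tag.concl, Sequent.mk.injEq] at hteq
      obtain ⟨h1, h2, h3⟩ := hteq
      subst h2
      have har0 : 0 < Tag.arity (.impL Γa φ' ψ' Δa sa) := by simp [Tag.arity]
      have har1 : 1 < Tag.arity (.impL Γa φ' ψ' Δa sa) := by simp [Tag.arity]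
      have hτ' : Provable (Fml.imp φ' ψ' ::ₘ (Fml.box χ ::ₘ Γa)) sa Δ := by
        rw [← h1] at hτ
        rwa [Multiset.cons_swap] at hτ
      have τ0 : Provable (Fml.box χ ::ₘ Γa) sa (φ' ::ₘ Δ) := invL0 hτ'
      have τ1 : Provable (Fml.box χ ::ₘ (ψ' ::ₘ Γa)) sa Δ := by
        have := invL1 hτ'
        rwa [Multiset.cons_swap] at this
      have c0 : Provable Γa sa (φ' ::ₘ Δ) :=
        IH 0 _ ht rfl rfl har0 sa Γa (φ' ::ₘ Δ)
          ((childProof hp ht har0).2.2.ofEq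
            (Sequent.mk_eq rfl rfl (by rw [h3, Multiset.cons_swap]))) τ0
      have c1 : Provable (ψ' ::ₘ Γa) sa Δ :=
        IH 1 _ ht rfl rfl har1 sa (ψ' ::ₘ Γa) Δ
          ((childProof hp ht har1).2.2.ofEq (Sequent.mk_eq rfl rfl h3)) τ1
      refine (ProvS.glue (.impL Γa φ' ψ' Δ sa) (by simp [Tag.isCut]) ?_
        (by simp [Tag.sideOk]) ?_).ofEq (Sequent.mk_eq h1 rfl rfl)
      · intro ρ₀ hann
        exact hokD ρ₀ hann
      · intro i hi
        have : i < 2 := hi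
        interval_cases i
        · exact provS_iff.mpr c0
        · exact provS_iff.mpr c1
  | impR Γa φ' ψ' Δa sa =>
      simp only [Tag.concl, Sequent.mk.injEq] at hteq
      obtain ⟨h1, h2, h3⟩ := hteq
      subst h2
      have har0 : 0 < Tag.arity (.impR Γa φ' ψ' Δa sa) := by simp [Tag.arity]
      rcases Multiset.cons_eq_cons.mp h3 with ⟨he, _⟩ | ⟨_, cs, hcs1, hcs2⟩
      · exact absurd he (by simp)
      have hτ' : Provable (Fml.box χ ::ₘ (φ' ::ₘ Γ)) sa (ψ' ::ₘ cs) := by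
        rw [hcs2] at hτ
        have := invR hτ
        rwa [Multiset.cons_swap] at this
      have c0 : Provable (φ' ::ₘ Γ) sa (ψ' ::ₘ cs) :=
        IH 0 _ ht rfl rfl har0 sa (φ' ::ₘ Γ) (ψ' ::ₘ cs)
          ((childProof hp ht har0).2.2.ofEq
            (Sequent.mk_eq (by rw [h1]) rfl (by rw [hcs1, Multiset.cons_swap]))) hτ'
      refine (ProvS.glue (.impR Γ φ' ψ' cs sa) (by simp [Tag.isCut]) ?_
        (by simp [Tag.sideOk]) ?_).ofEq (Sequent.mk_eq rfl rfl hcs2.symm)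
      · intro ρ₀ hann
        show Fml.mbox ρ₀ ∈ Fml.imp φ' ψ' ::ₘ cs
        rw [← hcs2]
        exact hokD ρ₀ hann
      · intro i hi
        have : i < 1 := hi
        interval_cases i
        exact provS_iff.mpr c0
  | box Sg Γb P Δb φb sb =>
      simp only [Tag.concl, Sequent.mk.injEq] at hteq
      obtain ⟨h1, h2, h3⟩ := hteq
      subst h2
      rcases Multiset.cons_eq_cons.mp h3 with ⟨he, hrest⟩ | ⟨_, cs, hcs1, hcs2⟩
      · -- principal case
        have hφχ : φb = χ := boxInj he
        subst hφχ
        have w : Provable (Γb + dne P) Ann.o {φb} :=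
          provS_iff.mp ((childProvS hp hcf ht
            (show 0 < Tag.arity (.box Sg Γb P Δb φb sb) by simp [Tag.arity])).ofEq rfl)
        obtain ⟨τ, hτp, hτcf, hτc⟩ := hτ
        have hle : Γb.map Fml.box + P.map Fml.mbox ≤ Γ := by
          rw [← h1, add_assoc]
          exact self_le_add_left _ _
        exact lemF_aux φb hχ τ hτp hτcf sb Γ Δ hτc Γb P hle w
      · refine (ProvS.glue (.box Sg Γb P cs φb sb) (by simp [Tag.isCut]) ?_
          (by simp [Tag.sideOk]) ?_).ofEq (Sequent.mk_eq h1 rfl hcs2.symm)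
        · intro ρ₀ hann
          show Fml.mbox ρ₀ ∈ Fml.box φb ::ₘ cs
          rw [← hcs2]
          exact hokD ρ₀ hann
        · intro i hi
          have : i < 1 := hi
          interval_cases i
          exact childProvS hp hcf ht
            (show 0 < Tag.arity (.box Sg Γb P Δb φb sb) by simp [Tag.arity])
  | mboxF Sg Γb P Δb φb =>
      simp only [Tag.concl, Sequent.mk.injEq] at hteq
      obtain ⟨h1, h2, h3⟩ := hteq
      subst h2
      rcases Multiset.cons_eq_cons.mp h3 with ⟨he, _⟩ | ⟨_, cs, hcs1, hcs2⟩
      · exact absurd he (by simp)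
      refine (ProvS.glue (.mboxF Sg Γb P cs φb) (by simp [Tag.isCut]) ?_
        (by simp [Tag.sideOk]) ?_).ofEq (Sequent.mk_eq h1 rfl hcs2.symm)
      · intro ρ₀ hann
        have hann' : Ann.fml φb = Ann.fml ρ₀ := hann
        cases hann'
        exact Multiset.mem_cons_self _ _
      · intro i hi
        have : i < 2 := hi
        interval_cases i
        · exact childProvS hp hcf ht
            (show 0 < Tag.arity (.mboxF Sg Γb P Δb φb) by simp [Tag.arity])
        · exact childProvS hp hcf ht
            (show 1 < Tag.arity (.mboxF Sg Γb P Δb φb) by simp [Tag.arity])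
  | mboxU Sg Γb P Δb φb sb =>
      simp only [Tag.concl, Sequent.mk.injEq] at hteq
      obtain ⟨h1, h2, h3⟩ := hteq
      subst h2
      rcases Multiset.cons_eq_cons.mp h3 with ⟨he, _⟩ | ⟨_, cs, hcs1, hcs2⟩
      · exact absurd he (by simp)
      refine (ProvS.glue (.mboxU Sg Γb P cs φb sb) (by simp [Tag.isCut]) ?_
        (by simpa [Tag.sideOk] using hside) ?_).ofEq (Sequent.mk_eq h1 rfl hcs2.symm)
      · intro ρ₀ hann
        show Fml.mbox ρ₀ ∈ Fml.mbox φb ::ₘ cs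
        rw [← hcs2]
        exact hokD ρ₀ hann
      · intro i hi
        have : i < 2 := hi
        interval_cases i
        · exact childProvS hp hcf ht
            (show 0 < Tag.arity (.mboxU Sg Γb P Δb φb sb) by simp [Tag.arity])
        · exact childProvS hp hcf ht
            (show 1 < Tag.arity (.mboxU Sg Γb P Δb φb sb) by simp [Tag.arity])
  | cut Γc Δc χc sc =>
      exact absurd (hcf [] _ ht) (by simp [Tag.isCut])

/-- **Cut admissibility for box formulas**: if cut admissibility holds for `χ`, then
cuts on `□χ` are admissible. -/
theorem box_cut_admissibility (χ : Fml) (hχ : CutAdm χ) (s : Ann) (Γ Δ : Msf)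
    (h₁ : Provable Γ s (Fml.box χ ::ₘ Δ)) (h₂ : Provable (Fml.box χ ::ₘ Γ) s Δ) :
    Provable Γ s Δ := by
  obtain ⟨ρ, hp, hcf, hc⟩ := h₁
  exact lemG_aux χ hχ ρ hp hcf s Γ Δ hc h₂
end

section
/- Right contraction of a propositional variable: for every propositional variable p there is a strongly preserving function rctr_p from proofs in G∞ℓK⁺_s + Cut to proofs in G∞ℓK⁺_s + Cut such that if π proves Γ ⇒_s Δ,p,p then rctr_p(π) proves Γ ⇒_s Δ,p. -/
universe u

deriving instance DecidableEq for Fml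

namespace RC
open Multiset

/-- Erase one copy of `var p` from the Δ-field of a tag. -/
def eraseT (p : ℕ) : Tag → Tag
  | .ax Γ q Δ s => .ax Γ q (Δ.erase (Fml.var p)) s
  | .axBot Γ Δ s => .axBot Γ (Δ.erase (Fml.var p)) s
  | .impL Γ φ ψ Δ s => .impL Γ φ ψ (Δ.erase (Fml.var p)) s
  | .impR Γ φ ψ Δ s => .impR Γ φ ψ (Δ.erase (Fml.var p)) s
  | .box Sg Γ P Δ φ s => .box Sg Γ P (Δ.erase (Fml.var p)) φ s
  | .mboxF Sg Γ P Δ φ => .mboxF Sg Γ P (Δ.erase (Fml.var p)) φ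
  | .mboxU Sg Γ P Δ φ s => .mboxU Sg Γ P (Δ.erase (Fml.var p)) φ s
  | .cut Γ Δ χ s => .cut Γ (Δ.erase (Fml.var p)) χ s

/-- Transparent rules: contraction passes through them. -/
def transp : Tag → Bool
  | .impL .. => true
  | .impR .. => true
  | .cut .. => true
  | _ => false

lemma eraseT_arity (p : ℕ) (t : Tag) : (eraseT p t).arity = t.arity := by
  cases t <;> rfl

lemma eraseT_witness (p : ℕ) (t : Tag) (i : ℕ) :
    (eraseT p t).witness i = t.witness i := by
  cases t <;> (cases i with | zero => rfl | succ n => cases n <;> rfl)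

lemma eraseT_progress (p : ℕ) (t : Tag) (i : ℕ) :
    (eraseT p t).progress i = t.progress i := by
  cases t <;> (cases i with | zero => rfl | succ n => cases n <;> rfl)

lemma eraseT_isCut (p : ℕ) (t : Tag) : (eraseT p t).isCut ↔ t.isCut := by
  cases t <;> exact Iff.rfl

lemma eraseT_cutFml (p : ℕ) (t : Tag) : (eraseT p t).cutFml = t.cutFml := by
  cases t <;> rfl

lemma eraseT_sideOk (p : ℕ) (t : Tag) : (eraseT p t).sideOk ↔ t.sideOk := by
  cases t <;> exact Iff.rfl

lemma transp_false_of_witness (t : Tag) (i : ℕ) (h : t.witness i = true) :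
    transp t = false := by
  cases t <;> first
    | rfl
    | (cases i with
        | zero => simp [Tag.witness] at h
        | succ n => cases n <;> simp [Tag.witness] at h)

lemma erase_cons_mem {φ x : Fml} {Δ : Msf} (h : φ = x → x ∈ Δ) :
    (φ ::ₘ Δ).erase x = φ ::ₘ Δ.erase x := by
  by_cases hx : φ = x
  · subst hx
    rw [Multiset.erase_cons_head, Multiset.cons_erase (h rfl)]
  · rw [Multiset.erase_cons_tail _ hx]

lemma mem_of_two_le_count_cons {x y : Fml} {Δ : Msf} (h : 2 ≤ (y ::ₘ Δ).count x) :
    x ∈ Δ := by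
  rw [Multiset.count_cons] at h
  refine Multiset.count_pos.mp ?_
  split at h <;> omega

lemma eraseT_concl (p : ℕ) (t : Tag)
    (h : 2 ≤ t.concl.right.count (Fml.var p)) :
    (eraseT p t).concl =
      ⟨t.concl.left, t.concl.ann, t.concl.right.erase (Fml.var p)⟩ := by
  cases t with
  | ax Γ q Δ s =>
      simp only [eraseT, Tag.concl] at *
      rw [erase_cons_mem (fun _ => mem_of_two_le_count_cons h)]
  | axBot Γ Δ s => rfl
  | impL Γ φ ψ Δ s => rfl
  | impR Γ φ ψ Δ s =>
      simp only [eraseT, Tag.concl]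
      rw [erase_cons_mem (fun hq => absurd hq (by simp))]
  | box Sg Γ P Δ φ s =>
      simp only [eraseT, Tag.concl]
      rw [erase_cons_mem (fun hq => absurd hq (by simp))]
  | mboxF Sg Γ P Δ φ =>
      simp only [eraseT, Tag.concl]
      rw [erase_cons_mem (fun hq => absurd hq (by simp))]
  | mboxU Sg Γ P Δ φ s =>
      simp only [eraseT, Tag.concl]
      rw [erase_cons_mem (fun hq => absurd hq (by simp))]
  | cut Γ Δ χ s => rfl

lemma eraseT_prem_opaque (p : ℕ) (t : Tag) (ht : transp t = false) (i : ℕ) :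
    (eraseT p t).prem i = t.prem i := by
  cases t <;> first
    | (cases i with | zero => rfl | succ n => cases n <;> rfl)
    | (simp [transp] at ht)

lemma eraseT_prem (p : ℕ) (t : Tag) (ht : transp t = true)
    (h : 2 ≤ t.concl.right.count (Fml.var p)) (i : ℕ) :
    (eraseT p t).prem i =
      ⟨(t.prem i).left, (t.prem i).ann, (t.prem i).right.erase (Fml.var p)⟩ := by
  cases t with
  | impL Γ φ ψ Δ s =>
      simp only [Tag.concl] at h
      cases i with
      | zero =>
          simp only [eraseT, Tag.prem]
          rw [erase_cons_mem (fun _ => Multiset.count_pos.mp (by omega))]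
      | succ n => cases n <;> simp [eraseT, Tag.prem, Multiset.erase_zero]
  | impR Γ φ ψ Δ s =>
      simp only [Tag.concl] at h
      have hΔ : 2 ≤ Δ.count (Fml.var p) := by
        rwa [Multiset.count_cons_of_ne (by simp)] at h
      cases i with
      | zero =>
          simp only [eraseT, Tag.prem]
          rw [erase_cons_mem (fun _ => Multiset.count_pos.mp (by omega))]
      | succ n => cases n <;> simp [eraseT, Tag.prem, Multiset.erase_zero]
  | cut Γ Δ χ s =>
      simp only [Tag.concl] at h
      cases i with
      | zero =>
          simp only [eraseT, Tag.prem]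
          rw [erase_cons_mem (fun _ => Multiset.count_pos.mp (by omega))]
      | succ n => cases n <;> simp [eraseT, Tag.prem, Multiset.erase_zero]
  | ax Γ q Δ s => simp [transp] at ht
  | axBot Γ Δ s => simp [transp] at ht
  | box Sg Γ P Δ φ s => simp [transp] at ht
  | mboxF Sg Γ P Δ φ => simp [transp] at ht
  | mboxU Sg Γ P Δ φ s => simp [transp] at ht

lemma count_prem_ge (p : ℕ) (t : Tag) (ht : transp t = true)
    (h : 2 ≤ t.concl.right.count (Fml.var p)) (i : ℕ) (hi : i < t.arity) :
    2 ≤ ((t.prem i).right.count (Fml.var p)) := by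
  cases t with
  | impL Γ φ ψ Δ s =>
      simp only [Tag.concl] at h
      simp only [Tag.arity] at hi
      interval_cases i
      · exact le_trans h (Multiset.count_le_of_le _ (Multiset.le_cons_self Δ φ))
      · exact h
  | impR Γ φ ψ Δ s =>
      simp only [Tag.concl] at h
      simp only [Tag.arity] at hi
      have hΔ : 2 ≤ Δ.count (Fml.var p) := by
        rwa [Multiset.count_cons_of_ne (by simp)] at h
      interval_cases i
      exact le_trans hΔ (Multiset.count_le_of_le _ (Multiset.le_cons_self Δ ψ))
  | cut Γ Δ χ s =>
      simp only [Tag.concl] at h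
      simp only [Tag.arity] at hi
      interval_cases i
      · exact le_trans h (Multiset.count_le_of_le _ (Multiset.le_cons_self Δ χ))
      · exact h
  | ax Γ q Δ s => simp [transp] at ht
  | axBot Γ Δ s => simp [transp] at ht
  | box Sg Γ P Δ φ s => simp [transp] at ht
  | mboxF Sg Γ P Δ φ => simp [transp] at ht
  | mboxU Sg Γ P Δ φ s => simp [transp] at ht

/-- Active addresses: every proper prefix carries a transparent tag. -/
def act (π : PreProof) (a : List ℕ) : Bool :=
  (List.range a.length).all fun k =>
    match π.label (a.take k) with
    | some t => transp t
    | none => true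

lemma act_nil (π : PreProof) : act π [] = true := rfl

lemma act_spec (π : PreProof) (a : List ℕ) :
    act π a = true ↔
      ∀ k < a.length, ∀ t, π.label (a.take k) = some t → transp t = true := by
  unfold act
  rw [List.all_eq_true]
  constructor
  · intro h k hk t hlab
    have := h k (List.mem_range.mpr hk)
    rw [hlab] at this
    exact this
  · intro h k hk
    rw [List.mem_range] at hk
    cases hlab : π.label (a.take k) with
    | none => rfl
    | some t => exact h k hk t hlab

lemma act_succ (π : PreProof) (a : List ℕ) (i : ℕ) :
    act π (a ++ [i]) = true ↔
      act π a = true ∧ ∀ t, π.label a = some t → transp t = true := by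
  rw [act_spec, act_spec]
  constructor
  · intro h
    constructor
    · intro k hk t hlab
      have h2 : (a ++ [i]).take k = a.take k :=
        List.take_append_of_le_length (le_of_lt hk)
      refine h k (by simp; omega) t ?_
      rwa [h2]
    · intro t hlab
      have h2 : (a ++ [i]).take a.length = a := by
        rw [List.take_append_of_le_length le_rfl, List.take_length]
      refine h a.length (by simp) t ?_
      rwa [h2]
  · rintro ⟨h1, h2⟩ k hk t hlab
    rcases lt_or_eq_of_le (Nat.lt_succ_iff.mp (by simpa using hk)) with hk' | hk'
    · have : (a ++ [i]).take k = a.take k :=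
        List.take_append_of_le_length (le_of_lt hk')
      exact h1 k hk' t (by rwa [this] at hlab)
    · subst hk'
      have : (a ++ [i]).take a.length = a := by
        rw [List.take_append_of_le_length le_rfl, List.take_length]
      exact h2 t (by rwa [this] at hlab)

lemma act_ext_false (π : PreProof) (a : List ℕ) (t : Tag)
    (hlab : π.label a = some t) (ht : transp t = false) (b : List ℕ) (i : ℕ) :
    act π (a ++ i :: b) = false := by
  by_contra hc
  rw [Bool.not_eq_false, act_spec] at hc
  have hlen : a.length < (a ++ i :: b).length := by simp
  have htake : (a ++ i :: b).take a.length = a := by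
    rw [List.take_append_of_le_length le_rfl, List.take_length]
  have := hc a.length hlen t (by rwa [htake])
  rw [this] at ht
  exact Bool.true_eq_false.mp ht

/-- The root-conclusion guard. -/
def guard (p : ℕ) (π : PreProof) : Bool :=
  match π.label [] with
  | some t => decide (2 ≤ t.concl.right.count (Fml.var p))
  | none => false

/-- The contraction function. -/
def F (p : ℕ) (π : PreProof) : PreProof :=
  if guard p π = true then
    ⟨fun a => (π.label a).map fun t => if act π a = true then eraseT p t else t⟩
  else π

abbrev gT (p : ℕ) (π : PreProof) (a : List ℕ) (t : Tag) : Tag :=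
  if act π a = true then eraseT p t else t

section Guarded
variable {p : ℕ} {π : PreProof} (hg : guard p π = true)
include hg

lemma F_eq : F p π = ⟨fun a => (π.label a).map (gT p π a)⟩ := if_pos hg

lemma F_label (a : List ℕ) : (F p π).label a = (π.label a).map (gT p π a) := by
  rw [F_eq hg]

lemma F_label_of {a : List ℕ} {t : Tag} (h : π.label a = some t) :
    (F p π).label a = some (gT p π a t) := by
  rw [F_label hg, h, Option.map_some]

lemma F_label_inv {a : List ℕ} {t' : Tag} (h : (F p π).label a = some t') :
    ∃ t, π.label a = some t ∧ t' = gT p π a t := by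
  rw [F_label hg] at h
  cases hl : π.label a with
  | none => rw [hl] at h; simp at h
  | some t => rw [hl] at h; exact ⟨t, rfl, (Option.some_injective _ h).symm⟩

lemma F_dom (a : List ℕ) : (F p π).dom a ↔ π.dom a := by
  unfold PreProof.dom
  rw [F_label hg]
  cases π.label a <;> simp

omit hg in
lemma gT_witness (a : List ℕ) (t : Tag) (i : ℕ) :
    (gT p π a t).witness i = t.witness i := by
  unfold gT; split
  · exact eraseT_witness p t i
  · rfl

omit hg in
lemma gT_progress (a : List ℕ) (t : Tag) (i : ℕ) :
    (gT p π a t).progress i = t.progress i := by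
  unfold gT; split
  · exact eraseT_progress p t i
  · rfl

omit hg in
lemma gT_arity (a : List ℕ) (t : Tag) : (gT p π a t).arity = t.arity := by
  unfold gT; split
  · exact eraseT_arity p t
  · rfl

omit hg in
lemma gT_isCut (a : List ℕ) (t : Tag) : (gT p π a t).isCut ↔ t.isCut := by
  unfold gT; split
  · exact eraseT_isCut p t
  · exact Iff.rfl

omit hg in
lemma gT_cutFml (a : List ℕ) (t : Tag) : (gT p π a t).cutFml = t.cutFml := by
  unfold gT; split
  · exact eraseT_cutFml p t
  · rfl

omit hg in
lemma gT_sideOk (a : List ℕ) (t : Tag) : (gT p π a t).sideOk ↔ t.sideOk := by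
  unfold gT; split
  · exact eraseT_sideOk p t
  · exact Iff.rfl

lemma guard_count {t : Tag} (h : π.label [] = some t) :
    2 ≤ t.concl.right.count (Fml.var p) := by
  unfold guard at hg
  rw [h] at hg
  exact of_decide_eq_true hg

/-- The key invariant: active nodes have two copies of `var p` on the right. -/
lemma invariant (hw : π.Wf) :
    ∀ a t, act π a = true → π.label a = some t →
      2 ≤ t.concl.right.count (Fml.var p) := by
  intro a
  induction a using List.reverseRecOn with
  | nil => intro t _ h; exact guard_count hg h
  | append_singleton b i ih =>
    intro t hact hlab
    have hdom : π.dom (b ++ [i]) := fun h => by rw [hlab] at h; exact Option.some_ne_none _ h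
    have hdomb : π.dom b := hw.prefixClosed b i hdom
    obtain ⟨t0, ht0⟩ := Option.ne_none_iff_exists'.mp hdomb
    obtain ⟨hactb, htr⟩ := (act_succ π b i).mp hact
    have h2 := ih t0 hactb ht0
    have hco := hw.coherent b t0 i t ht0 hlab
    have hi : i < t0.arity := (hw.arity b t0 ht0 i).mp hdom
    rw [hco]
    exact count_prem_ge p t0 (htr t0 ht0) h2 i hi

lemma F_wf (hw : π.Wf) : (F p π).Wf := by
  constructor
  · unfold PreProof.dom
    rw [F_label hg]
    have := hw.root
    unfold PreProof.dom at this
    cases h : π.label [] with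
    | none => exact absurd h this
    | some t => simp
  · intro a i h
    exact (F_dom hg a).mpr (hw.prefixClosed a i ((F_dom hg _).mp h))
  · intro a t' hlab i
    obtain ⟨t, hl, rfl⟩ := F_label_inv hg hlab
    rw [F_dom hg, gT_arity]
    exact hw.arity a t hl i
  · -- coherent
    intro a t' i ti' hlab hlabi
    obtain ⟨t, hl, rfl⟩ := F_label_inv hg hlab
    obtain ⟨ti, hli, rfl⟩ := F_label_inv hg hlabi
    have hco := hw.coherent a t i ti hl hli
    have hdomi : π.dom (a ++ [i]) := fun h => by rw [hli] at h; exact Option.some_ne_none _ h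
    have hi : i < t.arity := (hw.arity a t hl i).mp hdomi
    unfold gT
    by_cases ha : act π a = true
    · rw [if_pos ha]
      by_cases htr : transp t = true
      · have hacti : act π (a ++ [i]) = true :=
          (act_succ π a i).mpr ⟨ha, fun t0 ht0 => by
            rw [hl] at ht0; exact (Option.some_injective _ ht0) ▸ htr⟩
        rw [if_pos hacti]
        have h2t := invariant hg hw a t ha hl
        have h2ti := invariant hg hw (a ++ [i]) ti hacti hli
        rw [eraseT_concl p ti h2ti, eraseT_prem p t htr h2t i, hco]
      · have hacti : act π (a ++ [i]) = false := by
          by_contra hc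
          rw [Bool.not_eq_false] at hc
          exact htr (((act_succ π a i).mp hc).2 t hl)
        rw [hacti, if_neg (by simp)]
        rw [eraseT_prem_opaque p t (Bool.not_eq_true _ ▸ htr) i]
        exact hco
    · have hacti : act π (a ++ [i]) = false := by
        by_contra hc
        rw [Bool.not_eq_false] at hc
        exact ha ((act_succ π a i).mp hc).1
      rw [if_neg ha, hacti, if_neg (by simp)]
      exact hco
  · -- seqOk
    intro a t' hlab
    obtain ⟨t, hl, rfl⟩ := F_label_inv hg hlab
    have hok := hw.seqOk a t hl
    unfold gT
    split
    · rename_i ha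
      have h2 := invariant hg hw a t ha hl
      rw [eraseT_concl p t h2]
      intro φ hφ
      have := hok φ hφ
      exact Multiset.mem_erase_of_ne (by simp) |>.mpr this
    · exact hok
  · intro a t' hlab
    obtain ⟨t, hl, rfl⟩ := F_label_inv hg hlab
    exact (gT_sideOk a t).mpr (hw.side a t hl)

lemma F_isBranch (f : ℕ → ℕ) : (F p π).IsBranch f ↔ π.IsBranch f := by
  unfold PreProof.IsBranch
  exact forall_congr' fun n => F_dom hg _

lemma F_progressCond (h : π.ProgressCond) : (F p π).ProgressCond := by
  intro f hf N
  obtain ⟨n, hn, t, hlab, hpt⟩ := h f ((F_isBranch hg f).mp hf) N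
  refine ⟨n, hn, gT p π _ t, F_label_of hg hlab, ?_⟩
  rwa [gT_progress, gT_witness]

lemma F_ordOk (α : Ordinal.{0}) : (F p π).OrdOk α ↔ π.OrdOk α := by
  unfold PreProof.OrdOk
  constructor
  · rintro ⟨ord, h0, h⟩
    refine ⟨ord, h0, fun a t i hlab hdom => ?_⟩
    have := h a (gT p π a t) i (F_label_of hg hlab) ((F_dom hg _).mpr hdom)
    rwa [gT_witness] at this
  · rintro ⟨ord, h0, h⟩
    refine ⟨ord, h0, fun a t' i hlab hdom => ?_⟩
    obtain ⟨t, hl, rfl⟩ := F_label_inv hg hlab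
    have := h a t i hl ((F_dom hg _).mp hdom)
    rwa [← gT_witness a t i] at this

lemma F_height : (F p π).height = π.height := by
  unfold PreProof.height
  congr 1
  ext α
  exact F_ordOk hg α

lemma F_inMainGlobal (a : List ℕ) : (F p π).inMainGlobal a ↔ π.inMainGlobal a := by
  unfold PreProof.inMainGlobal
  rw [F_dom hg]
  refine and_congr_right fun _ => ?_
  constructor
  · intro h b i hpre t hlab
    have := h b i hpre (gT p π b t) (F_label_of hg hlab)
    rwa [gT_witness] at this
  · intro h b i hpre t' hlab
    obtain ⟨t, hl, rfl⟩ := F_label_inv hg hlab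
    rw [gT_witness]
    exact h b i hpre t hl

lemma F_inMainLocal (a : List ℕ) : (F p π).inMainLocal a ↔ π.inMainLocal a := by
  unfold PreProof.inMainLocal
  rw [F_dom hg]
  refine and_congr_right fun _ => ?_
  constructor
  · intro h b i hpre t hlab
    have := h b i hpre (gT p π b t) (F_label_of hg hlab)
    rwa [gT_witness, gT_progress] at this
  · intro h b i hpre t' hlab
    obtain ⟨t, hl, rfl⟩ := F_label_inv hg hlab
    rw [gT_witness, gT_progress]
    exact h b i hpre t hl

lemma F_localHeight : (F p π).localHeight = π.localHeight := by
  unfold PreProof.localHeight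
  have hs : {a : List ℕ | (F p π).inMainLocal a} = {a | π.inMainLocal a} :=
    Set.ext fun a => F_inMainLocal hg a
  rw [hs]

lemma F_cutSizes (n : ℕ) (h : π.CutSizesLt n) : (F p π).CutSizesLt n := by
  intro a t' χ hlab hfml
  obtain ⟨t, hl, rfl⟩ := F_label_inv hg hlab
  rw [gT_cutFml] at hfml
  exact h a t χ hl hfml

lemma F_noCut (h : π.NoCutInMainLocal) : (F p π).NoCutInMainLocal := by
  intro a t' hlab hcut hml
  obtain ⟨t, hl, rfl⟩ := F_label_inv hg hlab
  exact h a t hl ((gT_isCut _ _).mp hcut) ((F_inMainLocal hg a).mp hml)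

lemma F_isProof (h : π.IsProof) : (F p π).IsProof := by
  obtain ⟨hw, hpc, α, ho⟩ := h
  exact ⟨F_wf hg hw, F_progressCond hg hpc, α, (F_ordOk hg α).mpr ho⟩

lemma F_localCutsOnly (h : π.LocalCutsOnly) : (F p π).LocalCutsOnly := by
  obtain ⟨hp, h2⟩ := h
  refine ⟨F_isProof hg hp, ?_⟩
  intro a t' hlab hcut
  obtain ⟨t, hl, rfl⟩ := F_label_inv hg hlab
  exact (F_inMainLocal hg a).mpr (h2 a t hl ((gT_isCut _ _).mp hcut))

lemma F_sub_eq {a : List ℕ} {t : Tag} (hl : π.label a = some t)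
    (ht : transp t = false) (i : ℕ) :
    (F p π).sub (a ++ [i]) = π.sub (a ++ [i]) := by
  unfold PreProof.sub
  congr 1
  funext b
  rw [F_label hg]
  have hact : act π (a ++ i :: b) = false :=
    act_ext_false π a t hl ht b i
  cases π.label (a ++ [i] ++ b) <;> simp [gT, hact]

lemma F_witness (h : ∀ τ : PreProof, τ.IsWitnessOf π → τ.LocalCutsOnly)
    (τ : PreProof) (hτ : τ.IsWitnessOf (F p π)) : τ.LocalCutsOnly := by
  obtain ⟨a, t', i, hmg, hlab, hwit, rfl⟩ := hτ
  obtain ⟨t, hl, rfl⟩ := F_label_inv hg hlab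
  rw [gT_witness] at hwit
  have htr := transp_false_of_witness t i hwit
  rw [F_sub_eq hg hl htr i]
  exact h _ ⟨a, t, i, (F_inMainGlobal hg a).mp hmg, hl, hwit, rfl⟩

omit hg in
lemma guard_true {Γ Δ : Msf} {s : Ann}
    (h : π.Concl ⟨Γ, s, Fml.var p ::ₘ Fml.var p ::ₘ Δ⟩) : guard p π = true := by
  obtain ⟨t, hl, hc⟩ := h
  unfold guard
  rw [hl]
  refine decide_eq_true ?_
  rw [hc]
  show 2 ≤ Multiset.count (Fml.var p) (Fml.var p ::ₘ Fml.var p ::ₘ Δ)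
  rw [Multiset.count_cons_self, Multiset.count_cons_self]
  omega

lemma F_concl {Γ Δ : Msf} {s : Ann}
    (h : π.Concl ⟨Γ, s, Fml.var p ::ₘ Fml.var p ::ₘ Δ⟩) :
    (F p π).Concl ⟨Γ, s, Fml.var p ::ₘ Δ⟩ := by
  obtain ⟨t, hl, hc⟩ := h
  refine ⟨gT p π [] t, F_label_of hg hl, ?_⟩
  have h2 : 2 ≤ t.concl.right.count (Fml.var p) := by
    rw [hc]
    show 2 ≤ Multiset.count (Fml.var p) (Fml.var p ::ₘ Fml.var p ::ₘ Δ)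
    rw [Multiset.count_cons_self, Multiset.count_cons_self]
    omega
  show (if act π [] = true then eraseT p t else t).concl = _
  rw [if_pos (act_nil π), eraseT_concl p t h2, hc]
  simp [Multiset.erase_cons_head]

end Guarded

lemma F_false {p : ℕ} {π : PreProof} (h : ¬ guard p π = true) : F p π = π := if_neg h

end RC
/-- **Right contraction of a propositional variable**: there is a strongly preserving
function `rctr_p` turning proofs of `Γ ⇒_s Δ,p,p` into proofs of `Γ ⇒_s Δ,p`. -/
theorem right_contraction_exists (p : ℕ) :
    ∃ f : PreProof → PreProof, StronglyPreserving f ∧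
      ∀ (Γ Δ : Msf) (s : Ann) (π : PreProof), π.IsProof →
        π.Concl ⟨Γ, s, Fml.var p ::ₘ Fml.var p ::ₘ Δ⟩ →
        (f π).IsProof ∧ (f π).Concl ⟨Γ, s, Fml.var p ::ₘ Δ⟩ := by
  refine ⟨RC.F p, ⟨⟨?_, ?_, ?_, ?_⟩, ?_, ?_⟩, ?_⟩
  · -- PreservesLocalHeight
    intro π _
    by_cases hg : RC.guard p π = true
    · exact le_of_eq (RC.F_localHeight hg)
    · rw [RC.F_false hg]
  · -- PreservesCutSizes
    intro n π _ h
    by_cases hg : RC.guard p π = true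
    · exact RC.F_cutSizes hg n h
    · rwa [RC.F_false hg]
  · -- PreservesMainLocalCutFree
    intro π _ h
    by_cases hg : RC.guard p π = true
    · exact RC.F_noCut hg h
    · rwa [RC.F_false hg]
  · -- PreservesCutLocality
    intro π h
    by_cases hg : RC.guard p π = true
    · exact RC.F_localCutsOnly hg h
    · rwa [RC.F_false hg]
  · -- PreservesOrdHeight
    intro π _
    by_cases hg : RC.guard p π = true
    · exact le_of_eq (RC.F_height hg)
    · rw [RC.F_false hg]
  · -- PreservesWitnessCutLocality
    intro π _ h τ hτ
    by_cases hg : RC.guard p π = true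
    · exact RC.F_witness hg h τ hτ
    · rw [RC.F_false hg] at hτ
      exact h τ hτ
  · -- the contraction itself
    intro Γ Δ s π hp hc
    have hg := RC.guard_true hc
    exact ⟨RC.F_isProof hg hp, RC.F_concl hg hc⟩
end
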